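/- arXiv:0710.5614 — 6 statements merged into one kernel-verified Lean document; each statement's English description precedes it below -/
import Mathlib

section
/- Let π be a generalized permutation of type (l,m) satisfying the convention, and let (λ_α)_{α∈𝒜} be positive real numbers with Σ_{i=1}^{l} λ_{π(i)} = Σ_{j=1}^{m} λ_{π(l+j)}. Then there exists a suspension data ζ for π with Re ζ_α = λ_α for every α if and only if π is irreducible. -/
/-!
Only `τ = Im ζ` matters: `ζ` with `Re ζ = λ` is a suspension datum iff the partial sums `T k` of
`τ` along `π` are positive inside the top line, drop below `T l` inside the bottom line, and
`T (2d) = 2 T l`. For a decomposition with corner indices `i1 ≤ i2 ≤ l ≤ i3 ≤ i4`, the corners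
`TL, BR` and `TR, BL` carry the same letters, so `T i1 + T i2 + T (2d) = T i3 + T i4`, which
contradicts these signs in every admissible pattern of empty corners.

Conversely, if no such `τ` exists, Gordan's alternative gives a convex combination of the
functionals `τ ↦ T k` (`0 < k < l`) and `τ ↦ T l - T (l + k)` (`0 < k < m`) that is a multiple of
`τ ↦ 2 T l - T (2d)`. Read on positions, it is a weight `w`, antitone along the top line, monotone
along the bottom line, and opposite on the two occurrences of each letter. The corners are where
`w` has a given sign on a given line, and `A, B, C, D` are the letters whose positive and negative
occurrences lie in `TL, BL`, `TL, TR`, `BR, BL`, `BR, TR`.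
-/


open Finset

/-- A generalized permutation of type `(l, m)`: a map from positions `1, …, l + m`
(the top line being positions `1, …, l` and the bottom line positions `l+1, …, l+m`)
to an alphabet `A`, such that every letter has exactly two preimages. -/
structure GenPerm (A : Type*) [DecidableEq A] where
  l : ℕ
  m : ℕ
  p : ℕ → A
  double : ∀ a : A, ((Finset.Icc 1 (l + m)).filter (fun i => p i = a)).card = 2

namespace GenPerm

variable {A : Type*} [DecidableEq A]

/-- Total number of positions, `l + m = 2d`. -/
def size (π : GenPerm A) : ℕ := π.l + π.m

/-- The multiset of letters occupying positions `a, a+1, …, b`. -/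
def seg (π : GenPerm A) (a b : ℕ) : Multiset A :=
  (Finset.Icc a b).val.map π.p

/-- `i` and `j` are the two positions of a common letter (i.e. `j = σ(i)` where `σ` is the
fixed-point-free involution associated to `π`). -/
def IsTwin (π : GenPerm A) (i j : ℕ) : Prop :=
  1 ≤ i ∧ i ≤ π.size ∧ 1 ≤ j ∧ j ≤ π.size ∧ i ≠ j ∧ π.p i = π.p j

/-- The convention: some letter has both occurrences on the top line, and some letter has
both occurrences on the bottom line. -/
def Convention (π : GenPerm A) : Prop :=
  (∃ i j, π.IsTwin i j ∧ i ≤ π.l ∧ j ≤ π.l) ∧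
  (∃ i j, π.IsTwin i j ∧ π.l < i ∧ π.l < j)

/-- `π` is reducible: it admits a decomposition with corners `A∪B`, `D∪B`, `A∪C`, `D∪C`
(for disjoint, not all empty, subsets `A,B,C,D` of the alphabet) such that (i) no corner is
empty, or (ii) exactly one corner is empty and it is a left one, or (iii) exactly two corners
are empty and they are both left or both right. -/
def Reducible (π : GenPerm A) : Prop :=
  ∃ (As Bs Cs Ds : Finset A) (i1 i2 i3 i4 : ℕ),
    Disjoint As Bs ∧ Disjoint As Cs ∧ Disjoint As Ds ∧
    Disjoint Bs Cs ∧ Disjoint Bs Ds ∧ Disjoint Cs Ds ∧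
    ¬(As = ∅ ∧ Bs = ∅ ∧ Cs = ∅ ∧ Ds = ∅) ∧
    i1 ≤ i2 ∧ i2 ≤ π.l ∧ π.l ≤ i3 ∧ i3 ≤ i4 ∧ i4 ≤ π.size ∧
    π.seg 1 i1 = As.val + Bs.val ∧
    π.seg (i2 + 1) π.l = Ds.val + Bs.val ∧
    π.seg (π.l + 1) i3 = As.val + Cs.val ∧
    π.seg (i4 + 1) π.size = Ds.val + Cs.val ∧
    ((π.seg 1 i1 ≠ 0 ∧ π.seg (i2 + 1) π.l ≠ 0 ∧ π.seg (π.l + 1) i3 ≠ 0 ∧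
        π.seg (i4 + 1) π.size ≠ 0) ∨
     (π.seg 1 i1 = 0 ∧ π.seg (i2 + 1) π.l ≠ 0 ∧ π.seg (π.l + 1) i3 ≠ 0 ∧
        π.seg (i4 + 1) π.size ≠ 0) ∨
     (π.seg 1 i1 ≠ 0 ∧ π.seg (i2 + 1) π.l ≠ 0 ∧ π.seg (π.l + 1) i3 = 0 ∧
        π.seg (i4 + 1) π.size ≠ 0) ∨
     (π.seg 1 i1 = 0 ∧ π.seg (i2 + 1) π.l ≠ 0 ∧ π.seg (π.l + 1) i3 = 0 ∧
        π.seg (i4 + 1) π.size ≠ 0) ∨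
     (π.seg 1 i1 ≠ 0 ∧ π.seg (i2 + 1) π.l = 0 ∧ π.seg (π.l + 1) i3 ≠ 0 ∧
        π.seg (i4 + 1) π.size = 0))

/-- `π` is irreducible if it is not reducible. -/
def Irreducible (π : GenPerm A) : Prop := ¬ π.Reducible

/-- `π` is strongly irreducible if every decomposition with corners `A∪B`, `D∪B`, `A∪C`,
`D∪C` (for disjoint subsets) has all four corners empty. -/
def StronglyIrreducible (π : GenPerm A) : Prop :=
  ∀ (As Bs Cs Ds : Finset A) (i1 i2 i3 i4 : ℕ),
    Disjoint As Bs → Disjoint As Cs → Disjoint As Ds →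
    Disjoint Bs Cs → Disjoint Bs Ds → Disjoint Cs Ds →
    i1 ≤ i2 → i2 ≤ π.l → π.l ≤ i3 → i3 ≤ i4 → i4 ≤ π.size →
    π.seg 1 i1 = As.val + Bs.val →
    π.seg (i2 + 1) π.l = Ds.val + Bs.val →
    π.seg (π.l + 1) i3 = As.val + Cs.val →
    π.seg (i4 + 1) π.size = Ds.val + Cs.val →
    (π.seg 1 i1 = 0 ∧ π.seg (i2 + 1) π.l = 0 ∧ π.seg (π.l + 1) i3 = 0 ∧
      π.seg (i4 + 1) π.size = 0)

/-- `Σ_{j=1}^{k} ζ_{π(j)}` (partial sum along the top line). -/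
noncomputable def topSum (π : GenPerm A) (ζ : A → ℂ) (k : ℕ) : ℂ := ∑ j ∈ Finset.Icc 1 k, ζ (π.p j)

/-- `Σ_{j=1}^{k} ζ_{π(l+j)}` (partial sum along the bottom line). -/
noncomputable def botSum (π : GenPerm A) (ζ : A → ℂ) (k : ℕ) : ℂ := ∑ j ∈ Finset.Icc 1 k, ζ (π.p (π.l + j))

/-- Real version of `topSum`. -/
noncomputable def topSumR (π : GenPerm A) (τ : A → ℝ) (k : ℕ) : ℝ := ∑ j ∈ Finset.Icc 1 k, τ (π.p j)

/-- Real version of `botSum`. -/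
noncomputable def botSumR (π : GenPerm A) (τ : A → ℝ) (k : ℕ) : ℝ := ∑ j ∈ Finset.Icc 1 k, τ (π.p (π.l + j))

/-- `ζ` is a suspension data for `π`. -/
def IsSuspension (π : GenPerm A) (ζ : A → ℂ) : Prop :=
  (∀ a, 0 < (ζ a).re) ∧
  (∀ i, 1 ≤ i → i ≤ π.l - 1 → 0 < (π.topSum ζ i).im) ∧
  (∀ i, 1 ≤ i → i ≤ π.m - 1 → (π.botSum ζ i).im < 0) ∧
  π.topSum ζ π.l = π.botSum ζ π.m

/-- `τ` is a pseudo-suspension for `π`. -/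
def IsPseudoSusp (π : GenPerm A) (τ : A → ℝ) : Prop :=
  (∀ k, 1 ≤ k → k ≤ π.l → 0 ≤ π.topSumR τ k) ∧
  (∀ k, 1 ≤ k → k ≤ π.m → π.botSumR τ k ≤ 0) ∧
  π.topSumR τ π.l = 0 ∧ π.botSumR τ π.m = 0

/-- `τ` is a strict pseudo-suspension for `π`: all the inequalities are strict except the
extremal ones. -/
def IsStrictPseudoSusp (π : GenPerm A) (τ : A → ℝ) : Prop :=
  π.IsPseudoSusp τ ∧
  (∀ k, 1 ≤ k → k ≤ π.l - 1 → 0 < π.topSumR τ k) ∧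
  (∀ k, 1 ≤ k → k ≤ π.m - 1 → π.botSumR τ k < 0)

/-- Number of occurrences of the letter `a` on the top line; so `a ∈ 𝒜₀ ↔ topCount = 2`,
`a ∈ 𝒜₁ ↔ topCount = 0`, and `a ∈ 𝒜₀₁ ↔ topCount = 1`. -/
def topCount (π : GenPerm A) (a : A) : ℕ :=
  ((Finset.Icc 1 π.l).filter (fun i => π.p i = a)).card

end GenPerm

section Gordan

variable {E : Type*} [AddCommGroup E] [Module ℝ E]

lemma Submodule.apply_eq_zero_of_forall_lt {W : Submodule ℝ E} {f : E →ₗ[ℝ] ℝ} {b : ℝ}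
    (hf : ∀ y ∈ W, b < f y) {x : E} (hx : x ∈ W) : f x = 0 := by
  by_contra hne
  have := hf (((b - 1) / f x) • x) (W.smul_mem _ hx)
  rw [map_smul, smul_eq_mul, div_mul_cancel₀ _ hne] at this
  linarith

theorem gordan_alternative [TopologicalSpace E] [IsTopologicalAddGroup E] [ContinuousSMul ℝ E]
    [LocallyConvexSpace ℝ E] {ι : Type*} [Fintype ι] (W : Submodule ℝ E)
    (hW : IsClosed (W : Set E)) (u : ι → E) :
    (∃ f : E →L[ℝ] ℝ, (∀ x ∈ W, f x = 0) ∧ ∀ k, 0 < f (u k)) ∨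
      ∃ c ∈ stdSimplex ℝ ι, ∑ k, c k • u k ∈ W := by
  classical
  set F := Fintype.linearCombination ℝ u
  by_cases h : ∃ c ∈ stdSimplex ℝ ι, F c ∈ W
  · right
    simpa [F, Fintype.linearCombination_apply] using h
  left
  push Not at h
  obtain ⟨f, a, b, hfK, hab, hfW⟩ := geometric_hahn_banach_compact_closed
    ((convex_stdSimplex ℝ ι).linear_image F)
    ((isCompact_stdSimplex ℝ ι).image F.continuous_of_finiteDimensional) W.convex hW
    (Set.disjoint_left.2 fun _ ⟨c, hc, hcx⟩ hx => h c hc (hcx ▸ hx))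
  have hb : b < 0 := by simpa using hfW 0 W.zero_mem
  refine ⟨-f, fun x hx => ?_, fun k => ?_⟩
  · have : f x = 0 := Submodule.apply_eq_zero_of_forall_lt (f := f.toLinearMap) hfW hx
    simp [this]
  · have := hfK _ ⟨_, single_mem_stdSimplex ℝ k, rfl⟩
    simp only [F, Fintype.linearCombination_apply, Pi.single_apply, ite_smul, one_smul,
      zero_smul, Finset.sum_ite_eq', Finset.mem_univ, if_true] at this
    show 0 < -f (u k)
    linarith

end Gordan

theorem Nat.exists_iff_le_of_downward_closed {P : ℕ → Prop} (n : ℕ)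
    (hP : ∀ i j, 1 ≤ i → i ≤ j → j ≤ n → P j → P i) :
    ∃ k ≤ n, ∀ i, 1 ≤ i → i ≤ n → (P i ↔ i ≤ k) := by
  classical
  refine ⟨Nat.findGreatest P n, Nat.findGreatest_le n, fun i hi hin => ⟨Nat.le_findGreatest hin,
    fun hik => hP i _ hi hik (Nat.findGreatest_le n) ?_⟩⟩
  exact Nat.findGreatest_of_ne_zero rfl (by omega)

theorem exists_sign_thresholds {w : ℕ → ℝ} {l n : ℕ} (hln : l ≤ n)
    (hanti : ∀ i j, 1 ≤ i → i ≤ j → j ≤ l → w j ≤ w i)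
    (hmono : ∀ i j, l < i → i ≤ j → j ≤ n → w i ≤ w j) :
    ∃ i1 i2 i3 i4, i1 ≤ i2 ∧ i2 ≤ l ∧ l ≤ i3 ∧ i3 ≤ i4 ∧ i4 ≤ n ∧
      (∀ i, 1 ≤ i → i ≤ n → (0 < w i ↔ i ≤ i1 ∨ i4 < i)) ∧
      (∀ i, 1 ≤ i → i ≤ n → (w i < 0 ↔ i2 < i ∧ i ≤ i3)) := by
  obtain ⟨i1, hi1, h1⟩ := Nat.exists_iff_le_of_downward_closed (P := fun i => 0 < w i) l
    fun i j hi hij hj h => h.trans_le (hanti i j hi hij hj)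
  obtain ⟨i2, hi2, h2⟩ := Nat.exists_iff_le_of_downward_closed (P := fun i => 0 ≤ w i) l
    fun i j hi hij hj h => h.trans (hanti i j hi hij hj)
  obtain ⟨j3, hj3, h3⟩ := Nat.exists_iff_le_of_downward_closed
    (P := fun s => w (l + s) < 0) (n - l)
    fun i j hi hij hj h => (hmono (l + i) (l + j) (by omega) (by omega) (by omega)).trans_lt h
  obtain ⟨j4, hj4, h4⟩ := Nat.exists_iff_le_of_downward_closed
    (P := fun s => w (l + s) ≤ 0) (n - l)
    fun i j hi hij hj h => (hmono (l + i) (l + j) (by omega) (by omega) (by omega)).trans h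
  have hbot (i : ℕ) (hi : l < i) : w i = w (l + (i - l)) := by rw [Nat.add_sub_cancel' hi.le]
  refine ⟨i1, i2, l + j3, l + j4, ?_, hi2, by omega, ?_, by omega, fun i hi hin => ?_,
    fun i hi hin => ?_⟩
  · by_contra! h
    exact absurd ((h2 i1 (by omega) hi1).1 ((h1 i1 (by omega) hi1).2 le_rfl).le) (by omega)
  · by_contra! h
    exact absurd ((h4 j3 (by omega) hj3).1 ((h3 j3 (by omega) hj3).2 le_rfl).le) (by omega)
  · rcases le_or_gt i l with hil | hil
    · rw [h1 i hi hil]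
      omega
    · rw [hbot i hil, ← not_le, h4 (i - l) (by omega) (by omega)]
      omega
  · rcases le_or_gt i l with hil | hil
    · rw [← not_le, h2 i hi hil]
      omega
    · rw [hbot i hil, h3 (i - l) (by omega) (by omega)]
      omega

namespace GenPerm

variable {A : Type*} [DecidableEq A] (π : GenPerm A)

lemma mem_seg {a b : ℕ} {x : A} : x ∈ π.seg a b ↔ ∃ i, a ≤ i ∧ i ≤ b ∧ π.p i = x := by
  simp [seg, and_assoc]

lemma seg_eq_zero_iff {a b : ℕ} : π.seg a b = 0 ↔ b < a := by
  simp [seg, Finset.Icc_eq_empty_iff]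

@[simp] lemma topSumR_zero (τ : A → ℝ) : π.topSumR τ 0 = 0 := by
  simp [topSumR]

lemma topSumR_succ (τ : A → ℝ) (k : ℕ) :
    π.topSumR τ (k + 1) = π.topSumR τ k + τ (π.p (k + 1)) :=
  Finset.sum_Icc_succ_top (by omega) _

lemma sum_map_seg (τ : A → ℝ) {a b : ℕ} (hab : a ≤ b) :
    ((π.seg (a + 1) b).map τ).sum = π.topSumR τ b - π.topSumR τ a := by
  have hIoc (n : ℕ) : Icc 1 n = Ioc 0 n := Icc_add_one_left_eq_Ioc 0 n
  rw [eq_sub_iff_add_eq', seg, Multiset.map_map, topSumR, topSumR, hIoc, hIoc,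
    Icc_add_one_left_eq_Ioc]
  exact Finset.sum_Ioc_consecutive _ (Nat.zero_le a) hab

lemma botSumR_eq_sub (τ : A → ℝ) (k : ℕ) :
    π.botSumR τ k = π.topSumR τ (π.l + k) - π.topSumR τ π.l := by
  induction k with
  | zero => simp [botSumR]
  | succ k ih =>
    rw [botSumR, Finset.sum_Icc_succ_top (by omega), ← botSumR, ih, ← add_assoc, topSumR_succ]
    ring

@[simp] lemma re_topSum (ζ : A → ℂ) (k : ℕ) :
    (π.topSum ζ k).re = π.topSumR (fun a => (ζ a).re) k := Complex.re_sum _ _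

@[simp] lemma im_topSum (ζ : A → ℂ) (k : ℕ) :
    (π.topSum ζ k).im = π.topSumR (fun a => (ζ a).im) k := Complex.im_sum _ _

@[simp] lemma re_botSum (ζ : A → ℂ) (k : ℕ) :
    (π.botSum ζ k).re = π.botSumR (fun a => (ζ a).re) k := Complex.re_sum _ _

@[simp] lemma im_botSum (ζ : A → ℂ) (k : ℕ) :
    (π.botSum ζ k).im = π.botSumR (fun a => (ζ a).im) k := Complex.im_sum _ _

/-- The conditions that `IsSuspension` puts on the imaginary parts. -/
def IsHeight (τ : A → ℝ) : Prop :=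
  (∀ k, 1 ≤ k → k ≤ π.l - 1 → 0 < π.topSumR τ k) ∧
    (∀ k, 1 ≤ k → k ≤ π.m - 1 → π.botSumR τ k < 0) ∧ π.topSumR τ π.l = π.botSumR τ π.m

lemma isSuspension_iff {ζ : A → ℂ} : π.IsSuspension ζ ↔ (∀ a, 0 < (ζ a).re) ∧
    π.topSumR (fun a => (ζ a).re) π.l = π.botSumR (fun a => (ζ a).re) π.m ∧
      π.IsHeight fun a => (ζ a).im := by
  simp only [IsSuspension, IsHeight, Complex.ext_iff, re_topSum, im_topSum, re_botSum, im_botSum]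
  tauto

lemma exists_isTwin {i : ℕ} (hi : 1 ≤ i) (hi' : i ≤ π.size) : ∃ j, π.IsTwin i j := by
  obtain ⟨j, hj, hji⟩ := Finset.exists_mem_ne (by rw [π.double (π.p i)]; omega) i
  simp only [Finset.mem_filter, Finset.mem_Icc] at hj
  exact ⟨j, hi, hi', hj.1.1, hj.1.2, hji.symm, hj.2.symm⟩

lemma filter_eq_pair {i j : ℕ} (h : π.IsTwin i j) :
    (Icc 1 π.size).filter (π.p · = π.p i) = {i, j} := by
  obtain ⟨hi, hi', hj, hj', hij, hp⟩ := h
  refine (Finset.eq_of_subset_of_card_le ?_ ?_).symm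
  · intro x hx
    rcases Finset.mem_insert.1 hx with rfl | hx
    · simp [hi, hi']
    · simp [Finset.mem_singleton.1 hx, hj, hj', hp]
  · rw [Finset.card_pair hij]
    exact (π.double _).le

namespace Convention

variable {π} (hconv : π.Convention)
include hconv

lemma pos_l : 0 < π.l := by
  obtain ⟨⟨i, -, ⟨hi, -⟩, hil, -⟩, -⟩ := hconv
  omega

lemma l_lt_size : π.l < π.size := by
  obtain ⟨-, ⟨i, -, ⟨-, hi, -⟩, hil, -⟩⟩ := hconv
  omega

lemma not_nodup_top : ¬(π.seg 1 π.l).Nodup := by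
  obtain ⟨⟨i, j, ⟨hi, -, hj, -, hij, hp⟩, hil, hjl⟩, -⟩ := hconv
  exact fun hnd => hij (Multiset.inj_on_of_nodup_map hnd i (by simp [hi, hil]) j
    (by simp [hj, hjl]) hp)

lemma not_nodup_bot : ¬(π.seg (π.l + 1) π.size).Nodup := by
  obtain ⟨-, ⟨i, j, ⟨-, hi, -, hj, hij, hp⟩, hil, hjl⟩⟩ := hconv
  exact fun hnd => hij (Multiset.inj_on_of_nodup_map hnd i (by simp; omega) j
    (by simp; omega) hp)

end Convention

/-- The body of `Reducible` without the nontriviality of `A, B, C, D` and the conditions on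
empty corners. -/
structure IsDecomposition (As Bs Cs Ds : Finset A) (i1 i2 i3 i4 : ℕ) : Prop where
  disjoint_AB : Disjoint As Bs
  disjoint_AC : Disjoint As Cs
  disjoint_AD : Disjoint As Ds
  disjoint_BC : Disjoint Bs Cs
  disjoint_BD : Disjoint Bs Ds
  disjoint_CD : Disjoint Cs Ds
  i1_le_i2 : i1 ≤ i2
  i2_le_l : i2 ≤ π.l
  l_le_i3 : π.l ≤ i3
  i3_le_i4 : i3 ≤ i4
  i4_le_size : i4 ≤ π.size
  top_left : π.seg 1 i1 = As.val + Bs.val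
  top_right : π.seg (i2 + 1) π.l = Ds.val + Bs.val
  bot_left : π.seg (π.l + 1) i3 = As.val + Cs.val
  bot_right : π.seg (i4 + 1) π.size = Ds.val + Cs.val

/-- The five admissible patterns of empty corners amount to: both right corners are nonempty, or
both right corners are empty and both left corners are not. -/
theorem reducible_iff : π.Reducible ↔ ∃ As Bs Cs Ds i1 i2 i3 i4,
    π.IsDecomposition As Bs Cs Ds i1 i2 i3 i4 ∧
      (i2 < π.l ∧ i4 < π.size ∨ 0 < i1 ∧ i2 = π.l ∧ π.l < i3 ∧ i4 = π.size) := by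
  constructor
  · rintro ⟨As, Bs, Cs, Ds, i1, i2, i3, i4, hAB, hAC, hAD, hBC, hBD, hCD, -, h12, h2l, hl3, h34,
      h4s, e1, e2, e3, e4, hcases⟩
    refine ⟨As, Bs, Cs, Ds, i1, i2, i3, i4,
      ⟨hAB, hAC, hAD, hBC, hBD, hCD, h12, h2l, hl3, h34, h4s, e1, e2, e3, e4⟩, ?_⟩
    simp only [ne_eq, seg_eq_zero_iff] at hcases
    omega
  · rintro ⟨As, Bs, Cs, Ds, i1, i2, i3, i4, hd, hcase⟩
    have h12 := hd.i1_le_i2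
    have h2l := hd.i2_le_l
    have hl3 := hd.l_le_i3
    have h34 := hd.i3_le_i4
    have h4s := hd.i4_le_size
    refine ⟨As, Bs, Cs, Ds, i1, i2, i3, i4, hd.disjoint_AB, hd.disjoint_AC, hd.disjoint_AD,
      hd.disjoint_BC, hd.disjoint_BD, hd.disjoint_CD, ?_, h12, h2l, hl3, h34, h4s,
      hd.top_left, hd.top_right, hd.bot_left, hd.bot_right, ?_⟩
    · rintro ⟨rfl, rfl, -, rfl⟩
      have h1 := (π.seg_eq_zero_iff).1 hd.top_left
      have h2 := (π.seg_eq_zero_iff).1 hd.top_right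
      omega
    · simp only [ne_eq, seg_eq_zero_iff]
      omega

namespace IsDecomposition

variable {π} {As Bs Cs Ds : Finset A} {i1 i2 i3 i4 : ℕ}
  (hd : π.IsDecomposition As Bs Cs Ds i1 i2 i3 i4)
include hd

/-- Both `TL + BR` and `TR + BL` are `A + B + C + D`. -/
lemma topSumR_add_eq (τ : A → ℝ) :
    π.topSumR τ i1 + π.topSumR τ i2 + π.topSumR τ π.size =
      π.topSumR τ i3 + π.topSumR τ i4 := by
  have e1 := congrArg (fun s => (s.map τ).sum) hd.top_left
  have e2 := congrArg (fun s => (s.map τ).sum) hd.top_right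
  have e3 := congrArg (fun s => (s.map τ).sum) hd.bot_left
  have e4 := congrArg (fun s => (s.map τ).sum) hd.bot_right
  simp only [Multiset.map_add, Multiset.sum_add] at e1 e2 e3 e4
  rw [← zero_add 1, π.sum_map_seg τ (Nat.zero_le _), topSumR_zero] at e1
  rw [π.sum_map_seg τ hd.i2_le_l] at e2
  rw [π.sum_map_seg τ hd.l_le_i3] at e3
  rw [π.sum_map_seg τ hd.i4_le_size] at e4
  linarith

lemma i1_lt_l (hconv : π.Convention) : i1 < π.l := by
  refine (hd.i1_le_i2.trans hd.i2_le_l).lt_of_ne fun h => hconv.not_nodup_top ?_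
  rw [← h, hd.top_left]
  exact (As.disjUnion Bs hd.disjoint_AB).nodup

lemma pos_i2 (hconv : π.Convention) : 0 < i2 := by
  refine Nat.pos_of_ne_zero fun h => hconv.not_nodup_top ?_
  rw [← zero_add 1, ← h, hd.top_right]
  exact (Ds.disjUnion Bs hd.disjoint_BD.symm).nodup

lemma i3_lt_size (hconv : π.Convention) : i3 < π.size := by
  refine (hd.i3_le_i4.trans hd.i4_le_size).lt_of_ne fun h => hconv.not_nodup_bot ?_
  rw [← h, hd.bot_left]
  exact (As.disjUnion Cs hd.disjoint_AC).nodup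

lemma l_lt_i4 (hconv : π.Convention) : π.l < i4 := by
  refine (hd.l_le_i3.trans hd.i3_le_i4).lt_of_ne' fun h => hconv.not_nodup_bot ?_
  rw [← h, hd.bot_right]
  exact (Ds.disjUnion Cs hd.disjoint_CD.symm).nodup

end IsDecomposition

theorem irreducible_of_isHeight (hconv : π.Convention) {τ : A → ℝ} (hτ : π.IsHeight τ) :
    π.Irreducible := by
  intro hred
  obtain ⟨As, Bs, Cs, Ds, i1, i2, i3, i4, hd, hcase⟩ := π.reducible_iff.1 hred
  obtain ⟨htop, hbot, htot⟩ := hτ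
  rw [botSumR_eq_sub] at htot
  set T := π.topSumR τ
  have hsize : π.size = π.l + π.m := rfl
  have hTtop (k : ℕ) (hk : 0 < k) (hkl : k < π.l) : 0 < T k := htop k hk (by omega)
  have hTbot (k : ℕ) (hk : π.l < k) (hks : k < π.size) : T k < T π.l := by
    have := hbot (k - π.l) (by omega) (by omega)
    rw [botSumR_eq_sub, Nat.add_sub_cancel' hk.le] at this
    linarith
  have hTsize : T π.size = 2 * T π.l := by
    rw [hsize]
    linarith
  have key := hd.topSumR_add_eq τ
  have h1 := hd.i1_lt_l hconv
  have h2 := hd.pos_i2 hconv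
  have h3 := hd.i3_lt_size hconv
  have h4 := hd.l_lt_i4 hconv
  rcases hcase with ⟨hi2, hi4⟩ | ⟨hi1, rfl, hi3, rfl⟩
  · have hT1 : 0 ≤ T i1 := by
      rcases i1.eq_zero_or_pos with h | h
      · simp [T, h]
      · exact (hTtop i1 h h1).le
    have hT3 : T i3 ≤ T π.l := by
      rcases hd.l_le_i3.eq_or_lt with h | h
      · rw [h]
      · exact (hTbot i3 h h3).le
    linarith [hTtop i2 h2 hi2, hTbot i4 h4 hi4]
  · linarith [hTtop i1 hi1 h1, hTbot i3 hi3 h3]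

lemma isDecomposition_of_nodup {i1 i2 i3 i4 : ℕ} (h12 : i1 ≤ i2) (h2l : i2 ≤ π.l)
    (hl3 : π.l ≤ i3) (h34 : i3 ≤ i4) (h4s : i4 ≤ π.size)
    (hTL : (π.seg 1 i1).Nodup) (hTR : (π.seg (i2 + 1) π.l).Nodup)
    (hBL : (π.seg (π.l + 1) i3).Nodup) (hBR : (π.seg (i4 + 1) π.size).Nodup)
    (hTLBR : ∀ x ∈ π.seg 1 i1, x ∉ π.seg (i4 + 1) π.size)
    (hTRBL : ∀ x ∈ π.seg (i2 + 1) π.l, x ∉ π.seg (π.l + 1) i3)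
    (hcover : ∀ x, x ∈ π.seg 1 i1 ∨ x ∈ π.seg (i4 + 1) π.size ↔
      x ∈ π.seg (i2 + 1) π.l ∨ x ∈ π.seg (π.l + 1) i3) :
    π.IsDecomposition
      ((π.seg 1 i1).toFinset ∩ (π.seg (π.l + 1) i3).toFinset)
      ((π.seg 1 i1).toFinset ∩ (π.seg (i2 + 1) π.l).toFinset)
      ((π.seg (i4 + 1) π.size).toFinset ∩ (π.seg (π.l + 1) i3).toFinset)
      ((π.seg (i4 + 1) π.size).toFinset ∩ (π.seg (i2 + 1) π.l).toFinset) i1 i2 i3 i4 := by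
  have hdisj {Y Z : Finset A} (h : ∀ x, x ∈ Y → x ∈ Z →
      x ∈ π.seg 1 i1 ∧ x ∈ π.seg (i4 + 1) π.size ∨
        x ∈ π.seg (i2 + 1) π.l ∧ x ∈ π.seg (π.l + 1) i3) : Disjoint Y Z :=
    Finset.disjoint_left.2 fun x hY hZ => (h x hY hZ).elim (fun h => hTLBR x h.1 h.2)
      fun h => hTRBL x h.1 h.2
  have hcorner {X : Multiset A} {Y Z : Finset A} (hX : X.Nodup) (hYZ : Disjoint Y Z)
      (h : ∀ x, x ∈ X ↔ x ∈ Y ∨ x ∈ Z) : X = Y.val + Z.val :=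
    (hX.ext (Y.disjUnion Z hYZ).nodup).2 fun x => by simp [h]
  refine ⟨hdisj ?_, hdisj ?_, hdisj ?_, hdisj ?_, hdisj ?_, hdisj ?_, h12, h2l, hl3, h34, h4s,
    hcorner hTL (hdisj ?_) ?_, hcorner hTR (hdisj ?_) ?_, hcorner hBL (hdisj ?_) ?_,
    hcorner hBR (hdisj ?_) ?_⟩ <;>
  · intro x
    simp only [Finset.mem_inter, Multiset.mem_toFinset]
    first
    | tauto
    | have := hcover x
      have := hTLBR x
      have := hTRBL x
      tauto

lemma mem_seg_or_mem_seg_iff_pos {w : ℕ → ℝ} {i1 i4 : ℕ} (h1l : i1 ≤ π.l)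
    (hpos : ∀ i, 1 ≤ i → i ≤ π.size → (0 < w i ↔ i ≤ i1 ∨ i4 < i)) (x : A) :
    x ∈ π.seg 1 i1 ∨ x ∈ π.seg (i4 + 1) π.size ↔
      ∃ i, 1 ≤ i ∧ i ≤ π.size ∧ π.p i = x ∧ 0 < w i := by
  simp only [mem_seg]
  constructor
  · rintro (⟨i, h1, h2, rfl⟩ | ⟨i, h1, h2, rfl⟩)
    exacts [⟨i, h1, by unfold size; omega, rfl, (hpos i h1 (by unfold size; omega)).2 (by omega)⟩,
      ⟨i, by omega, h2, rfl, (hpos i (by omega) h2).2 (by omega)⟩]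
  · rintro ⟨i, h1, h2, rfl, hi⟩
    rcases (hpos i h1 h2).1 hi with h | h
    exacts [Or.inl ⟨i, h1, h, rfl⟩, Or.inr ⟨i, h, h2, rfl⟩]

lemma mem_seg_or_mem_seg_iff_neg {w : ℕ → ℝ} {i2 i3 : ℕ} (h2l : i2 ≤ π.l) (hl3 : π.l ≤ i3)
    (h3s : i3 ≤ π.size)
    (hneg : ∀ i, 1 ≤ i → i ≤ π.size → (w i < 0 ↔ i2 < i ∧ i ≤ i3)) (x : A) :
    x ∈ π.seg (i2 + 1) π.l ∨ x ∈ π.seg (π.l + 1) i3 ↔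
      ∃ i, 1 ≤ i ∧ i ≤ π.size ∧ π.p i = x ∧ w i < 0 := by
  simp only [mem_seg]
  constructor
  · rintro (⟨i, h1, h2, rfl⟩ | ⟨i, h1, h2, rfl⟩)
    exacts [⟨i, by omega, by unfold size; omega, rfl,
        (hneg i (by omega) (by unfold size; omega)).2 (by omega)⟩,
      ⟨i, by omega, by omega, rfl, (hneg i (by omega) (by omega)).2 (by omega)⟩]
  · rintro ⟨i, h1, h2, rfl, hi⟩
    obtain ⟨h, h'⟩ := (hneg i h1 h2).1 hi
    rcases le_or_gt i π.l with hil | hil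
    exacts [Or.inl ⟨i, h, hil, rfl⟩, Or.inr ⟨i, hil, h', rfl⟩]

section Weight

variable {π} {w : ℕ → ℝ} (hw : ∀ i j, π.IsTwin i j → w i + w j = 0)
include hw

lemma eq_of_mul_pos {i j : ℕ} (hi : 1 ≤ i) (hi' : i ≤ π.size) (hj : 1 ≤ j) (hj' : j ≤ π.size)
    (hp : π.p i = π.p j) (h : 0 < w i * w j) : i = j := by
  by_contra hij
  rw [eq_neg_of_add_eq_zero_right (hw i j ⟨hi, hi', hj, hj', hij, hp⟩), mul_neg] at h
  nlinarith [mul_self_nonneg (w i)]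

lemma nodup_seg_of_mul_pos {a b : ℕ} (ha : 1 ≤ a) (hb : b ≤ π.size)
    (h : ∀ i j, a ≤ i → i ≤ b → a ≤ j → j ≤ b → 0 < w i * w j) : (π.seg a b).Nodup := by
  refine Multiset.Nodup.map_on (fun i hi j hj hp => ?_) (Icc a b).nodup
  simp only [Finset.mem_val, Finset.mem_Icc] at hi hj
  exact eq_of_mul_pos hw (by omega) (by omega) (by omega) (by omega) hp
    (h i j hi.1 hi.2 hj.1 hj.2)

lemma exists_pos_iff_exists_neg (x : A) :
    (∃ i, 1 ≤ i ∧ i ≤ π.size ∧ π.p i = x ∧ 0 < w i) ↔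
      ∃ i, 1 ≤ i ∧ i ≤ π.size ∧ π.p i = x ∧ w i < 0 := by
  have htwin {i : ℕ} (h1 : 1 ≤ i) (h2 : i ≤ π.size) :
      ∃ j, 1 ≤ j ∧ j ≤ π.size ∧ π.p j = π.p i ∧ w j = -w i := by
    obtain ⟨j, hj⟩ := π.exists_isTwin h1 h2
    exact ⟨j, hj.2.2.1, hj.2.2.2.1, hj.2.2.2.2.2.symm, by linarith [hw i j hj]⟩
  constructor <;> rintro ⟨i, h1, h2, rfl, hi⟩ <;> obtain ⟨j, hj1, hj2, hp, hwj⟩ := htwin h1 h2 <;>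
    exact ⟨j, hj1, hj2, hp, by linarith⟩

/-- Twins have opposite weights, so the positive positions `TL ∪ BR` and the negative positions
`TR ∪ BL` carry the same letters, each exactly once. -/
lemma exists_isDecomposition_of_sign {i1 i2 i3 i4 : ℕ} (h12 : i1 ≤ i2) (h2l : i2 ≤ π.l)
    (hl3 : π.l ≤ i3) (h34 : i3 ≤ i4) (h4s : i4 ≤ π.size)
    (hpos : ∀ i, 1 ≤ i → i ≤ π.size → (0 < w i ↔ i ≤ i1 ∨ i4 < i))
    (hneg : ∀ i, 1 ≤ i → i ≤ π.size → (w i < 0 ↔ i2 < i ∧ i ≤ i3)) :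
    ∃ As Bs Cs Ds, π.IsDecomposition As Bs Cs Ds i1 i2 i3 i4 := by
  have hsize : π.size = π.l + π.m := rfl
  have hTL (i : ℕ) (h1 : 1 ≤ i) (h2 : i ≤ i1) : 0 < w i := (hpos i h1 (by omega)).2 (by omega)
  have hBR (i : ℕ) (h1 : i4 + 1 ≤ i) (h2 : i ≤ π.size) : 0 < w i :=
    (hpos i (by omega) h2).2 (by omega)
  have hTR (i : ℕ) (h1 : i2 + 1 ≤ i) (h2 : i ≤ π.l) : w i < 0 :=
    (hneg i (by omega) (by omega)).2 (by omega)
  have hBL (i : ℕ) (h1 : π.l + 1 ≤ i) (h2 : i ≤ i3) : w i < 0 :=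
    (hneg i (by omega) (by omega)).2 (by omega)
  refine ⟨_, _, _, _, π.isDecomposition_of_nodup h12 h2l hl3 h34 h4s
    (nodup_seg_of_mul_pos hw le_rfl (by omega) fun i j hi hi' hj hj' =>
      mul_pos (hTL i hi hi') (hTL j hj hj'))
    (nodup_seg_of_mul_pos hw (by omega) (by omega) fun i j hi hi' hj hj' =>
      mul_pos_of_neg_of_neg (hTR i hi hi') (hTR j hj hj'))
    (nodup_seg_of_mul_pos hw (by omega) (by omega) fun i j hi hi' hj hj' =>
      mul_pos_of_neg_of_neg (hBL i hi hi') (hBL j hj hj'))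
    (nodup_seg_of_mul_pos hw (by omega) le_rfl fun i j hi hi' hj hj' =>
      mul_pos (hBR i hi hi') (hBR j hj hj'))
    (fun x hx hx' => ?_) (fun x hx hx' => ?_) fun x => ?_⟩
  · obtain ⟨i, hi, hi', rfl⟩ := π.mem_seg.1 hx
    obtain ⟨j, hj, hj', hp⟩ := π.mem_seg.1 hx'
    have := eq_of_mul_pos hw hi (by omega) (by omega) hj' hp.symm
      (mul_pos (hTL i hi hi') (hBR j hj hj'))
    omega
  · obtain ⟨i, hi, hi', rfl⟩ := π.mem_seg.1 hx
    obtain ⟨j, hj, hj', hp⟩ := π.mem_seg.1 hx'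
    have := eq_of_mul_pos hw (by omega) (by omega) (by omega) (by omega) hp.symm
      (mul_pos_of_neg_of_neg (hTR i hi hi') (hBL j hj hj'))
    omega
  · rw [π.mem_seg_or_mem_seg_iff_pos (h12.trans h2l) hpos,
      π.mem_seg_or_mem_seg_iff_neg h2l hl3 (h34.trans h4s) hneg]
    exact exists_pos_iff_exists_neg hw x

end Weight

theorem reducible_of_weight (hconv : π.Convention) {w : ℕ → ℝ}
    (hw : ∀ i j, π.IsTwin i j → w i + w j = 0)
    (hanti : ∀ i j, 1 ≤ i → i ≤ j → j ≤ π.l → w j ≤ w i)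
    (hmono : ∀ i j, π.l < i → i ≤ j → j ≤ π.size → w i ≤ w j)
    (hend : w π.l + w π.size = 0) (hne : ∃ i, 1 ≤ i ∧ i ≤ π.size ∧ w i ≠ 0) :
    π.Reducible := by
  have hl := hconv.pos_l
  have hls := hconv.l_lt_size
  obtain ⟨i1, i2, i3, i4, h12, h2l, hl3, h34, h4s, hpos, hneg⟩ :=
    exists_sign_thresholds hls.le hanti hmono
  obtain ⟨As, Bs, Cs, Ds, hd⟩ := exists_isDecomposition_of_sign hw h12 h2l hl3 h34 h4s hpos hneg
  refine π.reducible_iff.2 ⟨As, Bs, Cs, Ds, i1, i2, i3, i4, hd, ?_⟩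
  rcases lt_trichotomy (w π.l) 0 with hwl | hwl | hwl
  · have := (hneg π.l hl hls.le).1 hwl
    have := (hpos π.size (by omega) le_rfl).1 (by linarith)
    omega
  · have hi2 : ¬(i2 < π.l ∧ π.l ≤ i3) := fun h => ((hneg _ hl hls.le).2 h).ne hwl
    have hi4 : ¬(π.size ≤ i1 ∨ i4 < π.size) := fun h =>
      ((hpos _ (by omega) le_rfl).2 h).ne' (by linarith)
    obtain ⟨i, hi, hi', hwi⟩ := hne
    obtain ⟨j, hj⟩ := π.exists_isTwin hi hi'
    have hwj := hw i j hj
    obtain ⟨q, r, hq, hq', hwq, hr, hr', hwr⟩ :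
        ∃ q r, 1 ≤ q ∧ q ≤ π.size ∧ 0 < w q ∧ 1 ≤ r ∧ r ≤ π.size ∧ w r < 0 := by
      rcases hwi.lt_or_gt with h | h
      · exact ⟨j, i, hj.2.2.1, hj.2.2.2.1, by linarith, hi, hi', h⟩
      · exact ⟨i, j, hi, hi', h, hj.2.2.1, hj.2.2.2.1, by linarith⟩
    have := (hpos q hq hq').1 hwq
    have := (hneg r hr hr').1 hwr
    omega
  · -- the top twin given by the convention would carry two positive weights
    obtain ⟨⟨t, t', htt', htl, ht'l⟩, -⟩ := hconv
    linarith [hw t t' htt', hanti t π.l htt'.1 htl le_rfl, hanti t' π.l htt'.2.2.1 ht'l le_rfl]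

noncomputable def letterVec : (ℕ → ℝ) →ₗ[ℝ] A → ℝ :=
  ∑ i ∈ Icc 1 π.size, (LinearMap.proj i).smulRight (Pi.single (π.p i) 1)

lemma letterVec_apply (φ : ℕ → ℝ) (x : A) :
    π.letterVec φ x = ∑ i ∈ Icc 1 π.size with π.p i = x, φ i := by
  simp [letterVec, Finset.sum_apply, Pi.single_apply, Finset.sum_filter, eq_comm (a := x)]

lemma add_eq_zero_of_letterVec_eq_zero {φ : ℕ → ℝ} (h : π.letterVec φ = 0) {i j : ℕ}
    (hij : π.IsTwin i j) : φ i + φ j = 0 := by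
  have := congrFun h (π.p i)
  rwa [letterVec_apply, π.filter_eq_pair hij, Finset.sum_pair hij.2.2.2.2.1] at this

lemma map_letterVec_indicator (f : (A → ℝ) →L[ℝ] ℝ) {a b : ℕ} (hab : a ≤ b) (hb : b ≤ π.size) :
    f (π.letterVec ((Set.Icc (a + 1) b).indicator 1)) =
      π.topSumR (fun x => f (Pi.single x 1)) b - π.topSumR (fun x => f (Pi.single x 1)) a := by
  rw [← π.sum_map_seg _ hab, letterVec, LinearMap.sum_apply, map_sum]
  simp only [LinearMap.smulRight_apply, LinearMap.proj_apply, map_smul, smul_eq_mul,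
    Set.indicator_apply, ← Finset.coe_Icc, Finset.mem_coe, Pi.one_apply, ite_mul, one_mul,
    zero_mul, Finset.sum_ite_mem]
  rw [Finset.inter_eq_right.2 (Finset.Icc_subset_Icc (by omega) hb), seg, Multiset.map_map]
  rfl

def innerPrefixes : Finset (ℕ ⊕ ℕ) := (Icc 1 (π.l - 1)).disjSum (Icc 1 (π.m - 1))

/-- Under `letterVec` followed by a functional `f`, this becomes `topSumR τ n` for `inl n` and
`-botSumR τ n` for `inr n`, where `τ x = f (Pi.single x 1)`. -/
noncomputable def prefixIndicator : ℕ ⊕ ℕ → ℕ → ℝ :=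
  Sum.elim (fun n => (Set.Icc 1 n).indicator 1) fun n => -(Set.Icc (π.l + 1) (π.l + n)).indicator 1

/-- Under `letterVec` followed by a functional `f`, this becomes `topSumR τ l - botSumR τ m`. -/
noncomputable def lineSign : ℕ → ℝ :=
  (Set.Icc 1 π.l).indicator 1 - (Set.Icc (π.l + 1) π.size).indicator 1

lemma lineSign_of_le {i : ℕ} (hi : 1 ≤ i) (hil : i ≤ π.l) : π.lineSign i = 1 := by
  simp [lineSign, Set.indicator_apply]
  split_ifs <;> first | omega | norm_num

lemma lineSign_of_lt {i : ℕ} (hi : π.l < i) (his : i ≤ π.size) : π.lineSign i = -1 := by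
  simp [lineSign, Set.indicator_apply]
  split_ifs <;> first | omega | norm_num

section prefixIndicator

variable {π} {k : ℕ ⊕ ℕ} (hk : k ∈ π.innerPrefixes)
include hk

lemma prefixIndicator_antitone_top {i j : ℕ} (hi : 1 ≤ i) (hij : i ≤ j) (hj : j ≤ π.l) :
    π.prefixIndicator k j ≤ π.prefixIndicator k i := by
  rcases k with n | n <;> simp [innerPrefixes] at hk <;>
    simp [prefixIndicator, Set.indicator_apply] <;> split_ifs <;> first | omega | norm_num

lemma prefixIndicator_monotone_bot {i j : ℕ} (hi : π.l < i) (hij : i ≤ j) :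
    π.prefixIndicator k i ≤ π.prefixIndicator k j := by
  rcases k with n | n <;> simp [innerPrefixes] at hk <;>
    simp [prefixIndicator, Set.indicator_apply] <;> split_ifs <;> first | omega | norm_num

lemma prefixIndicator_l : π.prefixIndicator k π.l = 0 := by
  rcases k with n | n <;> simp [innerPrefixes] at hk <;>
    simp [prefixIndicator, Set.indicator_apply]
  omega

lemma prefixIndicator_size : π.prefixIndicator k π.size = 0 := by
  rcases k with n | n <;> simp [innerPrefixes] at hk <;>
    simp [prefixIndicator, Set.indicator_apply, size] <;> omega

lemma prefixIndicator_one_sub (hl : 0 < π.l) :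
    π.prefixIndicator k 1 - π.prefixIndicator k (π.l + 1) = 1 := by
  rcases k with n | n <;> simp [innerPrefixes] at hk <;>
    simp [prefixIndicator, Set.indicator_apply] <;> split_ifs <;> first | omega | norm_num

end prefixIndicator

theorem reducible_of_mem_span (hconv : π.Convention) {c : π.innerPrefixes → ℝ}
    (hc : c ∈ stdSimplex ℝ π.innerPrefixes)
    (hcomb : ∑ k, c k • π.letterVec (π.prefixIndicator k) ∈ ℝ ∙ π.letterVec π.lineSign) :
    π.Reducible := by
  obtain ⟨hc0, hc1⟩ := hc
  obtain ⟨γ, hγ⟩ := Submodule.mem_span_singleton.1 hcomb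
  have hl := hconv.pos_l
  have hls := hconv.l_lt_size
  set w : ℕ → ℝ := ∑ k, c k • π.prefixIndicator k - γ • π.lineSign
  have hw (i : ℕ) : w i = ∑ k, c k * π.prefixIndicator k i - γ * π.lineSign i := by
    simp [w, Finset.sum_apply]
  have hle (i j : ℕ) (hψ : π.lineSign i = π.lineSign j)
      (hφ : ∀ k : π.innerPrefixes, π.prefixIndicator k i ≤ π.prefixIndicator k j) : w i ≤ w j := by
    rw [hw, hw, hψ]
    gcongr with k
    exacts [hc0 k, hφ k]
  have hwl : w π.l = -γ := by
    simp [hw, prefixIndicator_l, π.lineSign_of_le hl le_rfl]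
  refine π.reducible_of_weight hconv
    (fun i j h => π.add_eq_zero_of_letterVec_eq_zero (by simp [w, map_sum, hγ]) h)
    (fun i j hi hij hj => hle j i (by rw [π.lineSign_of_le (by omega) hj, π.lineSign_of_le hi
      (by omega)]) fun k => prefixIndicator_antitone_top k.2 hi hij hj)
    (fun i j hi hij hj => hle i j (by rw [π.lineSign_of_lt hi (by omega), π.lineSign_of_lt
      (by omega) hj]) fun k => prefixIndicator_monotone_bot k.2 hi hij) ?_ ?_
  · simp [hwl, hw, prefixIndicator_size, π.lineSign_of_lt hls le_rfl]
  · -- `w 1 - w (l + 1) = 1 - 2 γ` and `w l = -γ` cannot all vanish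
    by_contra! h
    have h1 : ∑ k, c k * π.prefixIndicator k 1 - ∑ k, c k * π.prefixIndicator k (π.l + 1) = 1 := by
      rw [← Finset.sum_sub_distrib, ← hc1]
      exact Finset.sum_congr rfl fun k _ => by
        rw [← mul_sub, prefixIndicator_one_sub k.2 hl, mul_one]
    have e1 := h 1 le_rfl (by omega)
    have e2 := h (π.l + 1) (by omega) (by omega)
    have e3 := h π.l hl (by omega)
    rw [hw, π.lineSign_of_le le_rfl hl] at e1
    rw [hw, π.lineSign_of_lt (by omega) (by omega)] at e2
    rw [hwl] at e3
    linarith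

theorem exists_isHeight_of_irreducible (hconv : π.Convention) (hirr : π.Irreducible) :
    ∃ τ, π.IsHeight τ := by
  rcases gordan_alternative (ℝ ∙ π.letterVec π.lineSign) (Submodule.closed_of_finiteDimensional _)
    fun k : π.innerPrefixes => π.letterVec (π.prefixIndicator k) with ⟨f, hfW, hf⟩ | ⟨c, hc, hcomb⟩
  · have hsize : π.size = π.l + π.m := rfl
    have hI {a b : ℕ} (hab : a ≤ b) (hb : b ≤ π.size) := π.map_letterVec_indicator f hab hb
    refine ⟨fun x => f (Pi.single x 1), fun k hk hkl => ?_, fun k hk hkm => ?_, ?_⟩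
    · have := hf ⟨Sum.inl k, by simp [innerPrefixes]; omega⟩
      simpa [prefixIndicator, hI (Nat.zero_le k) (by omega)] using this
    · have := hf ⟨Sum.inr k, by simp [innerPrefixes]; omega⟩
      simp only [prefixIndicator, Sum.elim_inr, map_neg,
        hI (Nat.le_add_right π.l k) (by omega)] at this
      rw [botSumR_eq_sub]
      linarith
    · have := hfW _ (Submodule.mem_span_singleton_self _)
      simp only [lineSign, map_sub, hI (Nat.zero_le π.l) (by omega),
        hI (a := π.l) (by omega) le_rfl, topSumR_zero] at this
      rw [botSumR_eq_sub, ← hsize]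
      linarith
  · exact (hirr (π.reducible_of_mem_span hconv hc hcomb)).elim

end GenPerm

/-- A generalized permutation `π` (satisfying the convention), together
with positive length data `λ` with equal top and bottom total sums, admits a suspension
data `ζ` with `Re ζ_α = λ_α` if and only if `π` is irreducible. -/
theorem genPerm_suspension_iff_irreducible {A : Type*} [DecidableEq A] (π : GenPerm A)
    (hconv : π.Convention) (lam : A → ℝ) (hpos : ∀ a, 0 < lam a)
    (hsum : π.topSumR lam π.l = π.botSumR lam π.m) :
    (∃ ζ : A → ℂ, π.IsSuspension ζ ∧ ∀ a, (ζ a).re = lam a) ↔ π.Irreducible := by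
  refine ⟨fun ⟨ζ, hζ, _⟩ => π.irreducible_of_isHeight hconv (π.isSuspension_iff.1 hζ).2.2,
    fun hirr => ?_⟩
  obtain ⟨τ, hτ⟩ := π.exists_isHeight_of_irreducible hconv hirr
  exact ⟨fun a => ⟨lam a, τ a⟩, π.isSuspension_iff.2 ⟨hpos, hsum, hτ⟩, fun _ => rfl⟩
end

section
/- Every strongly irreducible generalized permutation admits a strict pseudo-suspension. -/
/-!
Pseudo-suspensions form a polyhedral cone, cut out by the partial-sum constraints, so it is
enough to find, for each interior partial sum separately, a pseudo-suspension on which it is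
strict, and to add these up. If there is none for some partial sum, Farkas' lemma writes it as a
nonnegative combination of the constraints. Such a combination is a weight on the positions,
antitone along the top line and monotone along the bottom line, whose two values at the
occurrences of each letter cancel. Its positive positions form a top-left and a bottom-right
corner and its negative positions a top-right and a bottom-left corner, and these four corners
decompose `π` with `A` the letters positive top-left and negative bottom-left, `B` those
positive top-left and negative top-right, and so on. Strong irreducibility forces the corners,
hence the weight, to vanish, which is impossible since the weight drops or rises strictly at
the chosen partial sum.
-/

open Finset

namespace Module.Dual

variable {𝕜 E : Type*} [Field 𝕜] [AddCommGroup E] [Module 𝕜 E]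

def projKerAlong (φ : Module.Dual 𝕜 E) (x₀ : E) : E →ₗ[𝕜] E :=
  LinearMap.id - (φ x₀)⁻¹ • φ.smulRight x₀

theorem apply_projKerAlong {φ : Module.Dual 𝕜 E} {x₀ : E} (h : φ x₀ ≠ 0) (x : E) :
    φ (φ.projKerAlong x₀ x) = 0 := by
  simp only [projKerAlong, LinearMap.sub_apply, LinearMap.id_apply, LinearMap.smul_apply,
    LinearMap.smulRight_apply, map_sub, map_smul, smul_eq_mul]
  rw [mul_left_comm, inv_mul_cancel₀ h, mul_one, sub_self]

theorem apply_eq_apply_projKerAlong_add (φ u : Module.Dual 𝕜 E) (x₀ x : E) :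
    u x = u (φ.projKerAlong x₀ x) + u x₀ / φ x₀ * φ x := by
  simp only [projKerAlong, LinearMap.sub_apply, LinearMap.id_apply, LinearMap.smul_apply,
    LinearMap.smulRight_apply, map_sub, map_smul, smul_eq_mul]
  ring

theorem exists_nonneg_sum_smul_eq [LinearOrder 𝕜] [IsStrictOrderedRing 𝕜] {ι : Type*}
    (S : Finset ι) (v : ι → Module.Dual 𝕜 E) (f : Module.Dual 𝕜 E)
    (hf : ∀ x, (∀ i ∈ S, 0 ≤ v i x) → 0 ≤ f x) :
    ∃ c : ι → 𝕜, (∀ i, 0 ≤ c i) ∧ f = ∑ i ∈ S, c i • v i := by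
  classical
  induction S using Finset.induction_on generalizing v f with
  | empty =>
    refine ⟨0, fun _ => le_rfl, LinearMap.ext fun x => ?_⟩
    have h₁ := hf x (by simp)
    have h₂ := hf (-x) (by simp)
    simp only [map_neg, neg_nonneg] at h₂
    simpa using le_antisymm h₂ h₁
  | @insert a S ha ih =>
    have hupd (c : ι → 𝕜) (t : 𝕜) :
        ∑ i ∈ insert a S, Function.update c a t i • v i = t • v a + ∑ i ∈ S, c i • v i := by
      rw [sum_insert ha, Function.update_self]
      exact congrArg _ (sum_congr rfl fun i hi => by
        rw [Function.update_of_ne (ne_of_mem_of_not_mem hi ha)])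
    have hupd_nonneg {c : ι → 𝕜} {t : 𝕜} (hc : ∀ i, 0 ≤ c i) (ht : 0 ≤ t) (i : ι) :
        0 ≤ Function.update c a t i := by
      rcases eq_or_ne i a with rfl | hi <;> simp [*]
    by_cases hS : ∀ x, (∀ i ∈ S, 0 ≤ v i x) → 0 ≤ f x
    · obtain ⟨c, hc, rfl⟩ := ih v f hS
      exact ⟨_, hupd_nonneg hc le_rfl, by rw [hupd, zero_smul, zero_add]⟩
    push Not at hS
    obtain ⟨x₀, hx₀S, hfx₀⟩ := hS
    have hvx₀ : v a x₀ < 0 := by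
      by_contra! hva
      exact hfx₀.not_ge (hf x₀ fun i hi => by
        rcases mem_insert.1 hi with rfl | hi
        exacts [hva, hx₀S i hi])
    set P := (v a).projKerAlong x₀
    obtain ⟨c, hc, hcP⟩ := ih (fun i => v i ∘ₗ P) (f ∘ₗ P) fun x hx => hf (P x) fun i hi => by
      rcases mem_insert.1 hi with rfl | hi
      exacts [(apply_projKerAlong hvx₀.ne x).ge, hx i hi]
    set ca := f x₀ / v a x₀ - ∑ i ∈ S, c i * (v i x₀ / v a x₀) with hca
    have hfeq : f = ca • v a + ∑ i ∈ S, c i • v i := by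
      ext x
      have hPx := LinearMap.congr_fun hcP x
      simp only [LinearMap.comp_apply, LinearMap.sum_apply, LinearMap.smul_apply,
        smul_eq_mul] at hPx
      simp only [LinearMap.add_apply, LinearMap.sum_apply, LinearMap.smul_apply, smul_eq_mul]
      rw [apply_eq_apply_projKerAlong_add (v a) f x₀ x, hPx, hca, sum_congr rfl fun i _ =>
        congrArg (c i * ·) (apply_eq_apply_projKerAlong_add (v a) (v i) x₀ x)]
      simp only [mul_add, sum_add_distrib, sub_mul, sum_mul, mul_assoc]
      ring
    have hca_pos : 0 < ca := by
      have hx₀ := LinearMap.congr_fun hfeq x₀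
      simp only [LinearMap.add_apply, LinearMap.sum_apply, LinearMap.smul_apply,
        smul_eq_mul] at hx₀
      have : 0 ≤ ∑ i ∈ S, c i * v i x₀ := sum_nonneg fun i hi => mul_nonneg (hc i) (hx₀S i hi)
      nlinarith
    exact ⟨_, hupd_nonneg hc hca_pos.le, by rw [hupd, ← hfeq]⟩

end Module.Dual

theorem Finset.card_filter_pos_eq_card_filter_neg_le_one {ι : Type*} {s : Finset ι} {w : ι → ℝ}
    (hs : #s = 2) (hw : ∑ i ∈ s, w i = 0) :
    #(s.filter (0 < w ·)) = #(s.filter (w · < 0)) ∧ #(s.filter (0 < w ·)) ≤ 1 := by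
  classical
  obtain ⟨x, y, hxy, rfl⟩ := card_eq_two.1 hs
  rw [sum_pair hxy, add_eq_zero_iff_eq_neg'] at hw
  rcases lt_trichotomy (w x) 0 with h | h | h <;>
    simp [filter_insert, filter_singleton, hw, h, h.not_gt]

theorem Finset.exists_filter_Icc_eq_Icc_left {P : ℕ → Prop} [DecidablePred P] {a b : ℕ}
    (ha : 0 < a) (hab : a ≤ b + 1) (hP : ∀ x y, a ≤ x → x ≤ y → y ≤ b → P y → P x) :
    ∃ c, a ≤ c + 1 ∧ c ≤ b ∧ (Icc a b).filter P = Icc a c := by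
  by_cases hne : ((Icc a b).filter P).Nonempty
  · have hmax := mem_filter.1 (max'_mem _ hne)
    rw [mem_Icc] at hmax
    refine ⟨_, by omega, hmax.1.2, ext fun x => ?_⟩
    simp only [mem_filter, mem_Icc]
    constructor
    · exact fun hx => ⟨hx.1.1, le_max' _ x (mem_filter.2 ⟨mem_Icc.2 hx.1, hx.2⟩)⟩
    · exact fun hx => ⟨⟨hx.1, hx.2.trans hmax.1.2⟩, hP _ _ hx.1 hx.2 hmax.1.2 hmax.2⟩
  · refine ⟨a - 1, by omega, by omega, ?_⟩
    rw [not_nonempty_iff_eq_empty.1 hne, Icc_eq_empty (by omega)]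

theorem Finset.exists_filter_Icc_eq_Icc_right {P : ℕ → Prop} [DecidablePred P] {a b : ℕ}
    (ha : 0 < a) (hab : a ≤ b + 1) (hP : ∀ x y, a ≤ x → x ≤ y → y ≤ b → P x → P y) :
    ∃ d, a ≤ d + 1 ∧ d ≤ b ∧ (Icc a b).filter P = Icc (d + 1) b := by
  by_cases hne : ((Icc a b).filter P).Nonempty
  · have hmin := mem_filter.1 (min'_mem _ hne)
    rw [mem_Icc] at hmin
    refine ⟨((Icc a b).filter P).min' hne - 1, by omega, by omega, ext fun x => ?_⟩
    simp only [mem_filter, mem_Icc]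
    constructor
    · exact fun hx => ⟨by have := min'_le _ x (mem_filter.2 ⟨mem_Icc.2 hx.1, hx.2⟩); omega, hx.1.2⟩
    · exact fun hx => ⟨⟨by omega, hx.2⟩, hP _ _ hmin.1.1 (by omega) hx.2 hmin.2⟩
  · refine ⟨b, hab, le_rfl, ?_⟩
    rw [not_nonempty_iff_eq_empty.1 hne, Icc_eq_empty (by omega)]

theorem AntitoneOn.exists_filter_pos_neg_eq_Icc {f : ℕ → ℝ} {a b : ℕ}
    (hf : AntitoneOn f (Set.Icc a b)) (ha : 0 < a) (hab : a ≤ b + 1) :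
    ∃ c d, a ≤ c + 1 ∧ c ≤ d ∧ d ≤ b ∧
      (Icc a b).filter (0 < f ·) = Icc a c ∧ (Icc a b).filter (f · < 0) = Icc (d + 1) b := by
  have hf' x y (hx : a ≤ x) (hxy : x ≤ y) (hy : y ≤ b) : f y ≤ f x :=
    hf ⟨hx, hxy.trans hy⟩ ⟨hx.trans hxy, hy⟩ hxy
  obtain ⟨c, hac, hcb, hpos⟩ := exists_filter_Icc_eq_Icc_left (P := (0 < f ·)) ha hab
    fun x y hx hxy hy h => h.trans_le (hf' x y hx hxy hy)
  obtain ⟨d, had, hdb, hneg⟩ := exists_filter_Icc_eq_Icc_right (P := (f · < 0)) ha hab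
    fun x y hx hxy hy h => (hf' x y hx hxy hy).trans_lt h
  refine ⟨c, d, hac, ?_, hdb, hpos, hneg⟩
  by_contra! hdc
  have h₁ : c ∈ (Icc a b).filter (0 < f ·) := hpos ▸ mem_Icc.2 ⟨by omega, le_rfl⟩
  have h₂ : c ∈ (Icc a b).filter (f · < 0) := hneg ▸ mem_Icc.2 ⟨hdc, hcb⟩
  exact (mem_filter.1 h₁).2.not_gt (mem_filter.1 h₂).2

theorem AddSubmonoid.exists_forall_pos {E ι M : Type*} [AddCommMonoid E] [AddCommMonoid M]
    [PartialOrder M] [IsOrderedCancelAddMonoid M] (C : AddSubmonoid E) (φ : ι → E →+ M)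
    (S : Finset ι) (hnonneg : ∀ i ∈ S, ∀ x ∈ C, 0 ≤ φ i x) (hpos : ∀ i ∈ S, ∃ x ∈ C, 0 < φ i x) :
    ∃ x ∈ C, ∀ i ∈ S, 0 < φ i x := by
  choose! x hxC hx using hpos
  refine ⟨∑ j ∈ S, x j, C.sum_mem hxC, fun i hi => ?_⟩
  rw [map_sum]
  exact sum_pos' (fun j hj => hnonneg i hi _ (hxC j hj)) ⟨i, hi, hx i hi⟩

namespace GenPerm

variable {A : Type*} [DecidableEq A] (π : GenPerm A)

def weight : (ℕ → ℝ) →ₗ[ℝ] Module.Dual ℝ (A → ℝ) :=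
  ∑ i ∈ Icc 1 π.size, (LinearMap.proj i).smulRight (LinearMap.proj (π.p i))

theorem weight_apply (w : ℕ → ℝ) (τ : A → ℝ) :
    π.weight w τ = ∑ i ∈ Icc 1 π.size, w i * τ (π.p i) := by
  simp [weight]

theorem weight_indicator_Icc {a b : ℕ} (ha : 1 ≤ a) (hb : b ≤ π.size) (τ : A → ℝ) :
    π.weight ((Set.Icc a b).indicator 1) τ = ∑ i ∈ Icc a b, τ (π.p i) := by
  simp only [weight_apply, Set.indicator_apply, Pi.one_apply, ite_mul, one_mul, zero_mul]
  rw [← sum_filter]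
  congr 1
  ext i
  simp only [mem_filter, mem_Icc, Set.mem_Icc]
  omega

theorem topSumR_eq_weight {k : ℕ} (hk : k ≤ π.l) (τ : A → ℝ) :
    π.topSumR τ k = π.weight ((Set.Icc 1 k).indicator 1) τ := by
  rw [weight_indicator_Icc π le_rfl (hk.trans (Nat.le_add_right _ _)), topSumR]

theorem botSumR_eq_weight {k : ℕ} (hk : k ≤ π.m) (τ : A → ℝ) :
    π.botSumR τ k = π.weight ((Set.Icc (π.l + 1) (π.l + k)).indicator 1) τ := by
  rw [weight_indicator_Icc π (Nat.le_add_left _ _) (Nat.add_le_add_left hk _), botSumR,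
    ← map_add_left_Icc, sum_map]
  rfl

open Classical in
noncomputable def constraintWeights : Finset (ℕ → ℝ) :=
  ((range (π.l + 1)).image fun k => (Set.Icc 1 k).indicator 1) ∪
    ((range (π.m + 1)).image fun k => -(Set.Icc (π.l + 1) (π.l + k)).indicator 1) ∪
    {-(Set.Icc 1 π.l).indicator 1, (Set.Icc (π.l + 1) (π.l + π.m)).indicator 1}

open Classical in
noncomputable def interiorConstraintWeights : Finset (ℕ → ℝ) :=
  ((Icc 1 (π.l - 1)).image fun k => (Set.Icc 1 k).indicator 1) ∪
    ((Icc 1 (π.m - 1)).image fun k => -(Set.Icc (π.l + 1) (π.l + k)).indicator 1)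

theorem interiorConstraintWeights_subset : π.interiorConstraintWeights ⊆ π.constraintWeights := by
  intro g hg
  simp only [interiorConstraintWeights, constraintWeights, mem_union, mem_image, mem_Icc,
    mem_range] at hg ⊢
  rcases hg with ⟨k, hk, rfl⟩ | ⟨k, hk, rfl⟩
  exacts [.inl (.inl ⟨k, by omega, rfl⟩), .inl (.inr ⟨k, by omega, rfl⟩)]

theorem isPseudoSusp_iff (τ : A → ℝ) :
    π.IsPseudoSusp τ ↔ ∀ g ∈ π.constraintWeights, 0 ≤ π.weight g τ := by
  have hT0 : π.topSumR τ 0 = 0 := by simp [topSumR]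
  have hB0 : π.botSumR τ 0 = 0 := by simp [botSumR]
  simp only [constraintWeights, mem_union, mem_image, mem_range, mem_insert, mem_singleton]
  constructor
  · rintro ⟨hT, hB, hTl, hBm⟩ g ((⟨k, hk, rfl⟩ | ⟨k, hk, rfl⟩) | rfl | rfl)
    · rw [← topSumR_eq_weight π (by omega)]
      rcases k.eq_zero_or_pos with rfl | hk0
      exacts [hT0.ge, hT k hk0 (by omega)]
    · rw [map_neg, LinearMap.neg_apply, neg_nonneg, ← botSumR_eq_weight π (by omega)]
      rcases k.eq_zero_or_pos with rfl | hk0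
      exacts [hB0.le, hB k hk0 (by omega)]
    · rw [map_neg, LinearMap.neg_apply, ← topSumR_eq_weight π le_rfl, hTl, neg_zero]
    · rw [← botSumR_eq_weight π le_rfl, hBm]
  · intro h
    have hT k (hk : k ≤ π.l) : 0 ≤ π.topSumR τ k := by
      rw [topSumR_eq_weight π hk]
      exact h _ (.inl (.inl ⟨k, by omega, rfl⟩))
    have hB k (hk : k ≤ π.m) : π.botSumR τ k ≤ 0 := by
      have := h _ (.inl (.inr ⟨k, by omega, rfl⟩))
      rwa [map_neg, LinearMap.neg_apply, neg_nonneg, ← botSumR_eq_weight π hk] at this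
    have hTl : π.topSumR τ π.l ≤ 0 := by
      have := h _ (.inr (.inl rfl))
      rwa [map_neg, LinearMap.neg_apply, neg_nonneg, ← topSumR_eq_weight π le_rfl] at this
    have hBm : 0 ≤ π.botSumR τ π.m := by
      rw [botSumR_eq_weight π le_rfl]
      exact h _ (.inr (.inr rfl))
    exact ⟨fun k _ hk => hT k hk, fun k _ hk => hB k hk, le_antisymm hTl (hT _ le_rfl),
      le_antisymm (hB _ le_rfl) hBm⟩

def pseudoSuspSubmonoid : AddSubmonoid (A → ℝ) where
  carrier := {τ | π.IsPseudoSusp τ}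
  zero_mem' := (π.isPseudoSusp_iff 0).2 fun g _ => by rw [map_zero]
  add_mem' {τ σ} hτ hσ := (π.isPseudoSusp_iff _).2 fun g hg => by
    rw [map_add]
    exact add_nonneg ((π.isPseudoSusp_iff τ).1 hτ g hg) ((π.isPseudoSusp_iff σ).1 hσ g hg)

/-- The weights of the functionals that are nonnegative on every pseudo-suspension: by Farkas'
lemma these are the nonnegative combinations of `constraintWeights`. -/
def IsAdmissible (w : ℕ → ℝ) : Prop :=
  AntitoneOn w (Set.Icc 1 π.l) ∧ MonotoneOn w (Set.Icc (π.l + 1) π.size)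

variable {π}

theorem IsAdmissible.add {w v : ℕ → ℝ} (hw : π.IsAdmissible w) (hv : π.IsAdmissible v) :
    π.IsAdmissible (w + v) :=
  ⟨hw.1.add hv.1, hw.2.add hv.2⟩

theorem isAdmissible_sum {ι : Type*} (s : Finset ι) {c : ι → ℝ} {g : ι → ℕ → ℝ}
    (hc : ∀ i ∈ s, 0 ≤ c i) (hg : ∀ i ∈ s, π.IsAdmissible (g i)) :
    π.IsAdmissible (∑ i ∈ s, c i • g i) := by
  refine ⟨fun x hx y hy hxy => ?_, fun x hx y hy hxy => ?_⟩ <;>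
    simp only [Finset.sum_apply, Pi.smul_apply, smul_eq_mul] <;>
    refine sum_le_sum fun i hi => mul_le_mul_of_nonneg_left ?_ (hc i hi)
  exacts [(hg i hi).1 hx hy hxy, (hg i hi).2 hx hy hxy]

theorem IsAdmissible.congr {w v : ℕ → ℝ} (hw : π.IsAdmissible w)
    (h : Set.EqOn w v (Set.Icc 1 π.size)) : π.IsAdmissible v := by
  refine ⟨hw.1.congr (h.mono ?_), hw.2.congr (h.mono ?_)⟩ <;>
    exact Set.Icc_subset_Icc (by omega) (by simp [size])

theorem isAdmissible_of_mem_constraintWeights {g : ℕ → ℝ} (hg : g ∈ π.constraintWeights) :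
    π.IsAdmissible g := by
  simp only [constraintWeights, mem_union, mem_image, mem_range, mem_insert, mem_singleton] at hg
  rcases hg with (⟨k, hk, rfl⟩ | ⟨k, hk, rfl⟩) | rfl | rfl <;>
    refine ⟨fun x hx y hy hxy => ?_, fun x hx y hy hxy => ?_⟩ <;>
    simp only [Set.mem_Icc, size] at hx hy <;>
    simp only [Pi.neg_apply, Set.indicator_apply, Set.mem_Icc, Pi.one_apply] <;>
    split_ifs <;> first | omega | norm_num

theorem not_isAdmissible_neg_of_mem_interiorConstraintWeights {g : ℕ → ℝ}
    (hg : g ∈ π.interiorConstraintWeights) : ¬ π.IsAdmissible (-g) := by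
  simp only [interiorConstraintWeights, mem_union, mem_image, mem_Icc] at hg
  rintro ⟨htop, hbot⟩
  rcases hg with ⟨k, hk, rfl⟩ | ⟨k, hk, rfl⟩
  · have := htop (show k ∈ Set.Icc 1 π.l from ⟨hk.1, by omega⟩)
      (show k + 1 ∈ Set.Icc 1 π.l from ⟨by omega, by omega⟩) k.le_succ
    norm_num [hk.1] at this
  · have hmem i (h₁ : π.l < i) (h₂ : i ≤ π.l + π.m) : i ∈ Set.Icc (π.l + 1) π.size := ⟨h₁, h₂⟩
    have := hbot (hmem (π.l + k) (by omega) (by omega))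
      (hmem (π.l + k + 1) (by omega) (by omega)) (π.l + k).le_succ
    norm_num [hk.1] at this

theorem exists_isAdmissible_weight_eq (f : Module.Dual ℝ (A → ℝ))
    (hf : ∀ τ, π.IsPseudoSusp τ → 0 ≤ f τ) : ∃ w, π.IsAdmissible w ∧ f = π.weight w := by
  obtain ⟨c, hc, rfl⟩ := Module.Dual.exists_nonneg_sum_smul_eq π.constraintWeights π.weight f
    fun τ hτ => hf τ ((π.isPseudoSusp_iff τ).2 hτ)
  exact ⟨_, isAdmissible_sum _ (fun g _ => hc g) fun g => isAdmissible_of_mem_constraintWeights,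
    by simp⟩

variable (π)

def positions (a : A) : Finset ℕ := (Icc 1 π.size).filter (π.p · = a)

theorem count_seg (a : A) (u v : ℕ) :
    Multiset.count a (π.seg u v) = #((Icc u v).filter (π.p · = a)) := by
  rw [seg, Multiset.count_map, ← filter_val (fun x => a = π.p x), ← card_def]
  simp only [eq_comm]

theorem seg_eq_zero_iff_s4 (u v : ℕ) : π.seg u v = 0 ↔ Icc u v = ∅ := by
  rw [seg, Multiset.map_eq_zero, val_eq_zero]

theorem card_filter_top_add_card_filter_bot (Q : ℕ → Prop) [DecidablePred Q] (a : A) :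
    #(((Icc 1 π.l).filter Q).filter (π.p · = a)) +
      #(((Icc (π.l + 1) π.size).filter Q).filter (π.p · = a)) = #((π.positions a).filter Q) := by
  have hsplit : Icc 1 π.size = Icc 1 π.l ∪ Icc (π.l + 1) π.size := by
    ext i
    simp only [mem_union, mem_Icc, size]
    omega
  rw [positions, filter_comm (π.p · = a) Q, hsplit, filter_union, filter_union,
    card_union_of_disjoint]
  refine disjoint_filter_filter (disjoint_filter_filter (disjoint_left.2 fun i hi hi' => ?_))
  rw [mem_Icc] at hi hi'
  omega

variable {π}

theorem sum_positions_eq_zero {w : ℕ → ℝ} (h0 : π.weight w = 0) (a : A) :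
    ∑ i ∈ π.positions a, w i = 0 := by
  have := LinearMap.congr_fun h0 fun b => if b = a then 1 else 0
  simp only [weight_apply, LinearMap.zero_apply, mul_ite, mul_one, mul_zero] at this
  rwa [← sum_filter] at this

theorem StronglyIrreducible.corners_eq_zero (h : π.StronglyIrreducible) {i1 i2 i3 i4 : ℕ}
    (h12 : i1 ≤ i2) (h2 : i2 ≤ π.l) (h3 : π.l ≤ i3) (h34 : i3 ≤ i4) (h4 : i4 ≤ π.size)
    (hbal : ∀ a, (π.seg 1 i1).count a + (π.seg (i4 + 1) π.size).count a =
      (π.seg (i2 + 1) π.l).count a + (π.seg (π.l + 1) i3).count a)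
    (hle : ∀ a, (π.seg 1 i1).count a + (π.seg (i4 + 1) π.size).count a ≤ 1) :
    π.seg 1 i1 = 0 ∧ π.seg (i2 + 1) π.l = 0 ∧ π.seg (π.l + 1) i3 = 0 ∧
      π.seg (i4 + 1) π.size = 0 := by
  refine h ((π.seg 1 i1).toFinset ∩ (π.seg (π.l + 1) i3).toFinset)
    ((π.seg 1 i1).toFinset ∩ (π.seg (i2 + 1) π.l).toFinset)
    ((π.seg (i4 + 1) π.size).toFinset ∩ (π.seg (π.l + 1) i3).toFinset)
    ((π.seg (i4 + 1) π.size).toFinset ∩ (π.seg (i2 + 1) π.l).toFinset) i1 i2 i3 i4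
    ?_ ?_ ?_ ?_ ?_ ?_ h12 h2 h3 h34 h4 ?_ ?_ ?_ ?_
  all_goals first
    | exact disjoint_left.2 fun a h₁ h₂ => by
        simp only [mem_inter, Multiset.mem_toFinset, ← Multiset.count_pos] at h₁ h₂
        have := hbal a
        have := hle a
        omega
    | refine Multiset.ext.2 fun a => ?_
      simp only [Multiset.count_add, Multiset.count_eq_of_nodup (Finset.nodup _), Finset.mem_val,
        mem_inter, Multiset.mem_toFinset]
      simp only [← Multiset.count_pos]
      have := hbal a
      have := hle a
      split_ifs <;> omega

theorem StronglyIrreducible.eqOn_zero_of_weight_eq_zero (h : π.StronglyIrreducible)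
    {w : ℕ → ℝ} (hw : π.IsAdmissible w) (h0 : π.weight w = 0) :
    Set.EqOn w 0 (Set.Icc 1 π.size) := by
  obtain ⟨i1, i2, -, h12, h2, hTL, hTR⟩ := hw.1.exists_filter_pos_neg_eq_Icc one_pos (by omega)
  obtain ⟨i3, i4, h3, h34, h4, hBL, hBR⟩ :=
    hw.2.neg.exists_filter_pos_neg_eq_Icc (Nat.succ_pos _) (by simp [size])
  simp only [neg_pos, neg_lt_zero] at hBL hBR
  -- The two occurrences of a letter carry opposite weights, so each letter occurs as often among
  -- the positive positions (top-left and bottom-right corners) as among the negative ones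
  -- (top-right and bottom-left corners), and at most once.
  have hbal a := card_filter_pos_eq_card_filter_neg_le_one (π.double a)
    (sum_positions_eq_zero h0 a)
  have hpos a : (π.seg 1 i1).count a + (π.seg (i4 + 1) π.size).count a =
      #((π.positions a).filter (0 < w ·)) := by
    rw [count_seg, count_seg, ← hTL, ← hBR, card_filter_top_add_card_filter_bot]
  have hneg a : (π.seg (i2 + 1) π.l).count a + (π.seg (π.l + 1) i3).count a =
      #((π.positions a).filter (w · < 0)) := by
    rw [count_seg, count_seg, ← hTR, ← hBL, card_filter_top_add_card_filter_bot]
  obtain ⟨z1, z2, z3, z4⟩ := h.corners_eq_zero h12 h2 (by omega) h34 h4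
    (fun a => by rw [hpos, hneg]; exact (hbal a).1) (fun a => by rw [hpos]; exact (hbal a).2)
  rw [seg_eq_zero_iff_s4, ← hTL, filter_eq_empty_iff] at z1
  rw [seg_eq_zero_iff_s4, ← hTR, filter_eq_empty_iff] at z2
  rw [seg_eq_zero_iff_s4, ← hBL, filter_eq_empty_iff] at z3
  rw [seg_eq_zero_iff_s4, ← hBR, filter_eq_empty_iff] at z4
  intro i ⟨hi1, hi2⟩
  rcases le_or_gt i π.l with hil | hil
  · exact le_antisymm (not_lt.1 (z1 (mem_Icc.2 ⟨hi1, hil⟩))) (not_lt.1 (z2 (mem_Icc.2 ⟨hi1, hil⟩)))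
  · exact le_antisymm (not_lt.1 (z4 (mem_Icc.2 ⟨hil, hi2⟩))) (not_lt.1 (z3 (mem_Icc.2 ⟨hil, hi2⟩)))

theorem StronglyIrreducible.exists_isPseudoSusp_weight_pos (h : π.StronglyIrreducible)
    {g : ℕ → ℝ} (hg : π.IsAdmissible g) (hg' : ¬ π.IsAdmissible (-g)) :
    ∃ τ, π.IsPseudoSusp τ ∧ 0 < π.weight g τ := by
  by_contra! hcon
  obtain ⟨w, hw, hwg⟩ := exists_isAdmissible_weight_eq (-π.weight g) fun τ hτ => by
    simpa using hcon τ hτ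
  have h0 : π.weight (w + g) = 0 := by rw [map_add, ← hwg, neg_add_cancel]
  refine hg' (hw.congr fun i hi => ?_)
  simpa [add_eq_zero_iff_eq_neg] using h.eqOn_zero_of_weight_eq_zero (hw.add hg) h0 hi

end GenPerm

/-- Every strongly irreducible generalized permutation admits a strict
pseudo-suspension. -/
theorem stronglyIrreducible_exists_strictPseudoSusp {A : Type*} [DecidableEq A]
    (π : GenPerm A) (h : π.StronglyIrreducible) :
    ∃ τ : A → ℝ, π.IsStrictPseudoSusp τ := by
  classical
  obtain ⟨τ, hτ, hpos⟩ := π.pseudoSuspSubmonoid.exists_forall_pos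
    (fun g => (π.weight g).toAddMonoidHom) π.interiorConstraintWeights
    (fun g hg τ hτ => (π.isPseudoSusp_iff τ).1 hτ g (π.interiorConstraintWeights_subset hg))
    fun g hg => h.exists_isPseudoSusp_weight_pos
      (GenPerm.isAdmissible_of_mem_constraintWeights (π.interiorConstraintWeights_subset hg))
      (GenPerm.not_isAdmissible_neg_of_mem_interiorConstraintWeights hg)
  refine ⟨τ, hτ, fun k hk hkl => ?_, fun k hk hkm => ?_⟩
  · rw [π.topSumR_eq_weight (by omega)]
    exact hpos _ (mem_union_left _ (mem_image_of_mem _ (mem_Icc.2 ⟨hk, hkl⟩)))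
  · have := hpos _ (mem_union_right _ (mem_image_of_mem
      (fun k => -(Set.Icc (π.l + 1) (π.l + k)).indicator 1) (mem_Icc.2 ⟨hk, hkm⟩)))
    rw [π.botSumR_eq_weight (by omega)]
    simpa using this
end

section
/- Let π be a generalized permutation of type (2d,0) (all 2d positions on the top line) with associated fixed-point-free involution σ of {1,…,2d}. Then there exists a collection of real numbers (τ_α)_{α∈𝒜} such that, for every 1 ≤ i_0 ≤ 2d, Σ_{i=1}^{i_0} τ_{π(i)} ≥ 0, with equality Σ_{i=1}^{i_0} τ_{π(i)} = 0 if and only if σ({1,…,i_0}) = {2d−i_0+1,…,2d}. -/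
open Finset

private lemma sum_range_le_sum_of_card {m : ℕ} :
    ∀ T : Finset ℕ, T.card = m →
      (∑ t ∈ Finset.range m, t) ≤ (∑ t ∈ T, t) ∧
      ((∑ t ∈ T, t) = ∑ t ∈ Finset.range m, t → T = Finset.range m) := by
  induction m with
  | zero =>
    intro T h
    simp [Finset.card_eq_zero.mp h]
  | succ m ih =>
    intro T h
    have hne : T.Nonempty := Finset.card_pos.mp (by omega)
    have hMem : T.max' hne ∈ T := T.max'_mem hne
    have hsub : T ⊆ Finset.range (T.max' hne + 1) :=
      fun x hx => Finset.mem_range.mpr (Nat.lt_succ_of_le (T.le_max' x hx))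
    have hMge : m ≤ T.max' hne := by
      have := Finset.card_le_card hsub
      rw [Finset.card_range] at this; omega
    have herase : (T.erase (T.max' hne)).card = m := by
      simp [Finset.card_erase_of_mem hMem, h]
    obtain ⟨ih1, ih2⟩ := ih (T.erase (T.max' hne)) herase
    have hsum : ∑ t ∈ T, t = T.max' hne + ∑ t ∈ T.erase (T.max' hne), t :=
      (Finset.add_sum_erase T id hMem).symm
    rw [Finset.sum_range_succ, hsum]
    constructor
    · omega
    · intro heq
      have hM : T.max' hne = m := by omega
      have hT' : T.erase (T.max' hne) = Finset.range m := ih2 (by omega)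
      rw [← Finset.insert_erase hMem, hT', hM, Finset.range_add_one]

private lemma sum_Icc_pred (n : ℕ) :
    ∑ i ∈ Finset.Icc 1 n, (i - 1) = ∑ t ∈ Finset.range n, t := by
  induction n with
  | zero => simp
  | succ n ih =>
    rw [Finset.sum_Icc_succ_top (by omega : 1 ≤ n + 1), Finset.sum_range_succ, ih]
    simp

/-- For a generalized permutation of type `(2d, 0)` there is a collection
of real numbers `τ` whose partial sums `Σ_{i=1}^{i₀} τ_{π(i)}` are all nonnegative, with
equality exactly when the associated involution `σ` maps `{1, …, i₀}` onto
`{2d - i₀ + 1, …, 2d}`. -/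
theorem type_td_zero_exists_tau {A : Type*} [DecidableEq A] (π : GenPerm A)
    (hm : π.m = 0) :
    ∃ τ : A → ℝ, ∀ i0, 1 ≤ i0 → i0 ≤ π.size →
      0 ≤ π.topSumR τ i0 ∧
      (π.topSumR τ i0 = 0 ↔
        ∀ i ∈ Finset.Icc 1 i0, ∃ j, π.IsTwin i j ∧
          j ∈ Finset.Icc (π.size - i0 + 1) π.size) := by
  classical
  set N := π.size with hN
  set S : A → Finset ℕ := fun a => (Finset.Icc 1 N).filter (fun i => π.p i = a) with hS
  have hScard : ∀ a, (S a).card = 2 := fun a => by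
    simpa [hS, GenPerm.size, hN] using π.double a
  set σ : ℕ → ℕ := fun i => ((S (π.p i)).erase i).sum id with hσ
  have hmemS : ∀ i ∈ Finset.Icc 1 N, i ∈ S (π.p i) := by
    intro i hi
    rw [hS]
    exact Finset.mem_filter.mpr ⟨hi, rfl⟩
  have key : ∀ i ∈ Finset.Icc 1 N, σ i ∈ (S (π.p i)).erase i := by
    intro i hi
    have h1 : ((S (π.p i)).erase i).card = 1 := by
      rw [Finset.card_erase_of_mem (hmemS i hi), hScard]
    obtain ⟨x, hx⟩ := Finset.card_eq_one.mp h1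
    rw [hσ]
    simp [hx]
  have hσS : ∀ i ∈ Finset.Icc 1 N, σ i ∈ S (π.p i) :=
    fun i hi => Finset.mem_of_mem_erase (key i hi)
  have hσne : ∀ i ∈ Finset.Icc 1 N, σ i ≠ i :=
    fun i hi => Finset.ne_of_mem_erase (key i hi)
  have hσIcc : ∀ i ∈ Finset.Icc 1 N, σ i ∈ Finset.Icc 1 N :=
    fun i hi => (Finset.mem_filter.mp (hσS i hi)).1
  have hσp : ∀ i ∈ Finset.Icc 1 N, π.p (σ i) = π.p i :=
    fun i hi => (Finset.mem_filter.mp (hσS i hi)).2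
  have hSeq : ∀ i ∈ Finset.Icc 1 N, S (π.p i) = {i, σ i} := by
    intro i hi
    have h1 : ((S (π.p i)).erase i).card = 1 := by
      rw [Finset.card_erase_of_mem (hmemS i hi), hScard]
    obtain ⟨x, hx⟩ := Finset.card_eq_one.mp h1
    have hxσ : σ i = x := by rw [hσ]; simp [hx]
    rw [← Finset.insert_erase (hmemS i hi), hx, hxσ]
  have hσσ : ∀ i ∈ Finset.Icc 1 N, σ (σ i) = i := by
    intro i hi
    have hker : ({i, σ i} : Finset ℕ).erase (σ i) = {i} := by
      ext x
      simp only [Finset.mem_erase, Finset.mem_insert, Finset.mem_singleton]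
      constructor
      · rintro ⟨h1, h2 | h2⟩ <;> tauto
      · exact fun h => ⟨fun hc => hσne i hi (h.symm.trans hc).symm, Or.inl h⟩
    have : σ (σ i) = (((S (π.p (σ i))).erase (σ i)).sum id) := rfl
    rw [this, hσp i hi, hSeq i hi, hker, Finset.sum_singleton]
    rfl
  have hinjN : ∀ i ∈ Finset.Icc 1 N, ∀ j ∈ Finset.Icc 1 N, σ i = σ j → i = j := by
    intro i hi j hj hij
    rw [← hσσ i hi, ← hσσ j hj, hij]
  set τ : A → ℝ := fun a => (N + 1 : ℝ) - ∑ j ∈ S a, (j : ℝ) with hτdef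
  refine ⟨τ, ?_⟩
  have hτ : ∀ i ∈ Finset.Icc 1 N, τ (π.p i) = ((N - σ i : ℕ) : ℝ) - ((i - 1 : ℕ) : ℝ) := by
    intro i hi
    have h1 : 1 ≤ i ∧ i ≤ N := Finset.mem_Icc.mp hi
    have h2 : 1 ≤ σ i ∧ σ i ≤ N := Finset.mem_Icc.mp (hσIcc i hi)
    have hni : i ∉ ({σ i} : Finset ℕ) := by
      simp only [Finset.mem_singleton]
      exact fun h => (hσne i hi) h.symm
    rw [hτdef]
    simp only [hSeq i hi]
    rw [Finset.sum_insert hni, Finset.sum_singleton,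
      Nat.cast_sub h2.2, Nat.cast_sub h1.1]
    push_cast
    ring
  intro i0 h1 h2
  have hsub : Finset.Icc 1 i0 ⊆ Finset.Icc 1 N := Finset.Icc_subset_Icc le_rfl h2
  set D : ℕ := ∑ i ∈ Finset.Icc 1 i0, (N - σ i) with hD
  set E : ℕ := ∑ i ∈ Finset.Icc 1 i0, (i - 1) with hE
  have hsum : π.topSumR τ i0 = (D : ℝ) - (E : ℝ) := by
    rw [GenPerm.topSumR, Finset.sum_congr rfl (fun i hi => hτ i (hsub hi)),
      Finset.sum_sub_distrib, hD, hE]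
    push_cast
    ring
  have hEr : E = ∑ t ∈ Finset.range i0, t := sum_Icc_pred i0
  set f : ℕ → ℕ := fun i => N - σ i with hf
  have hinj : ∀ a ∈ Finset.Icc 1 i0, ∀ b ∈ Finset.Icc 1 i0, f a = f b → a = b := by
    intro a ha b hb hab
    have ha' := hsub ha
    have hb' := hsub hb
    have h2a := Finset.mem_Icc.mp (hσIcc a ha')
    have h2b := Finset.mem_Icc.mp (hσIcc b hb')
    have : σ a = σ b := by rw [hf] at hab; simp only at hab; omega
    exact hinjN a ha' b hb' this
  set T' : Finset ℕ := (Finset.Icc 1 i0).image f with hT'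
  have hcard : T'.card = i0 := by
    rw [hT', Finset.card_image_of_injOn hinj, Nat.card_Icc]
    omega
  have hDT : ∑ t ∈ T', t = D := by
    rw [hT', Finset.sum_image hinj, hD]
  obtain ⟨hle, heqc⟩ := sum_range_le_sum_of_card T' hcard
  have hED : E ≤ D := by rw [hEr, ← hDT]; exact hle
  constructor
  · rw [hsum]
    have : (E : ℝ) ≤ (D : ℝ) := Nat.cast_le.mpr hED
    linarith
  · rw [hsum]
    constructor
    · intro h0
      have hDE : D = E := by
        have : (D : ℝ) = (E : ℝ) := by linarith [sub_eq_zero.mp h0]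
        exact_mod_cast this
      have hTr : T' = Finset.range i0 := heqc (by rw [hDT, hDE, hEr])
      intro i hi
      have hiN := hsub hi
      have hb := Finset.mem_Icc.mp hiN
      have hσb := Finset.mem_Icc.mp (hσIcc i hiN)
      have hmemT : f i ∈ T' := Finset.mem_image_of_mem f hi
      rw [hTr, Finset.mem_range] at hmemT
      refine ⟨σ i, ⟨hb.1, hb.2, hσb.1, hσb.2, fun h => hσne i hiN h.symm,
        (hσp i hiN).symm⟩, ?_⟩
      · rw [Finset.mem_Icc]
        have : N - σ i < i0 := hmemT
        omega
    · intro hall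
      have hjeq : ∀ i ∈ Finset.Icc 1 i0, σ i ∈ Finset.Icc (N - i0 + 1) N := by
        intro i hi
        obtain ⟨j, htw, hj⟩ := hall i hi
        obtain ⟨_, _, hj1, hj2, hji, hpij⟩ := htw
        have hjS : j ∈ S (π.p i) := by
          rw [hS]
          exact Finset.mem_filter.mpr ⟨Finset.mem_Icc.mpr ⟨hj1, hj2⟩, hpij.symm⟩
        have : j = σ i := by
          rw [hSeq i (hsub hi)] at hjS
          rcases Finset.mem_insert.mp hjS with h | h
          · exact absurd h hji.symm
          · exact Finset.mem_singleton.mp h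
        rwa [← this]
      have hsubT : T' ⊆ Finset.range i0 := by
        intro t ht
        obtain ⟨i, hi, rfl⟩ := Finset.mem_image.mp ht
        have hmem := Finset.mem_Icc.mp (hjeq i hi)
        rw [Finset.mem_range, hf]
        simp only
        omega
      have hTr : T' = Finset.range i0 :=
        Finset.eq_of_subset_of_card_le hsubT (by rw [hcard, Finset.card_range])
      have : D = E := by rw [← hDT, hTr, ← hEr]
      rw [this]
      ring
end

section
/- A permutation pair π = (π_0,π_1) on an alphabet 𝒜 of d ≥ 2 letters admits a suspension data if and only if it is irreducible. Moreover, if π is irreducible, then for every collection of positive reals (λ_α)_{α∈𝒜}, the collection ζ_α := λ_α + i(π_1(α) − π_0(α)) is a suspension data for π. -/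
/-- A permutation pair `(π₀, π₁)` on the alphabet `A` (with values in `{1, …, d}`,
encoded `0`-based as `Fin d`) is irreducible if `π₁ ∘ π₀⁻¹ ({1,…,k}) ≠ {1,…,k}` for every
`1 ≤ k ≤ d - 1`. -/
def PairIrreducible {A : Type*} {d : ℕ} (π0 π1 : A ≃ Fin d) : Prop :=
  ∀ k : ℕ, 1 ≤ k → k ≤ d - 1 →
    Finset.image (fun i => π1 (π0.symm i)) (Finset.univ.filter fun i : Fin d => (i : ℕ) < k) ≠
      Finset.univ.filter fun i : Fin d => (i : ℕ) < k

/-- `ζ` is a suspension data for the permutation pair `(π₀, π₁)`. -/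
def PairSuspension {A : Type*} [Fintype A] {d : ℕ} (π0 π1 : A ≃ Fin d) (ζ : A → ℂ) : Prop :=
  (∀ a, 0 < (ζ a).re) ∧
  ∀ k : ℕ, 1 ≤ k → k ≤ d - 1 →
    0 < (∑ a ∈ Finset.univ.filter (fun a => ((π0 a : ℕ)) < k), ζ a).im ∧
    (∑ a ∈ Finset.univ.filter (fun a => ((π1 a : ℕ)) < k), ζ a).im < 0

/-!
If the sets `{α | π₀ α < k}` and `{α | π₁ α < k}` coincide, the two imaginary-part conditions on
the same sum contradict each other; irreducibility says precisely that they never coincide for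
`1 ≤ k < d`. Conversely, for `Im ζ_α = π₁ α - π₀ α` the imaginary part of the sum over
`{α | π₀ α < k}` is `∑ π₁ α - (0 + ⋯ + (k - 1))`, and a `k`-element set of naturals other than
`{0, …, k - 1}` has a strictly larger sum.
-/

open Finset

theorem Finset.sum_range_lt_sum_of_card_eq {k : ℕ} {t : Finset ℕ} (hcard : #t = k)
    (hne : t ≠ range k) : ∑ i ∈ range k, i < ∑ i ∈ t, i := by
  have hmissing : (range k \ t).Nonempty := by
    rw [sdiff_nonempty]
    exact fun hsub => hne (eq_of_subset_of_card_le hsub (by simp [hcard])).symm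
  calc ∑ i ∈ range k, i
      = ∑ i ∈ range k ∩ t, i + ∑ i ∈ range k \ t, i := (sum_inter_add_sum_sdiff _ _ _).symm
    _ < ∑ i ∈ t ∩ range k, i + #(range k \ t) • k := by
        rw [inter_comm]
        gcongr
        rw [← sum_const]
        exact sum_lt_sum_of_nonempty hmissing fun i hi => by simpa using (mem_sdiff.1 hi).1
    _ = ∑ i ∈ t ∩ range k, i + #(t \ range k) • k := by
        rw [card_sdiff_comm (by simp [hcard])]
    _ ≤ ∑ i ∈ t ∩ range k, i + ∑ i ∈ t \ range k, i := by
        gcongr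
        exact card_nsmul_le_sum _ _ _ fun i hi => by simpa using (mem_sdiff.1 hi).2
    _ = ∑ i ∈ t, i := sum_inter_add_sum_sdiff _ _ _

theorem im_sum_mk_sub {A : Type*} {d : ℕ} (π0 π1 : A ≃ Fin d) (lam : A → ℝ) (s : Finset A) :
    (∑ a ∈ s, (⟨lam a, ((π1 a : ℕ) : ℝ) - ((π0 a : ℕ) : ℝ)⟩ : ℂ)).im =
      ((∑ a ∈ s, (π1 a : ℕ) : ℕ) : ℝ) - ((∑ a ∈ s, (π0 a : ℕ) : ℕ) : ℝ) := by
  simp [Complex.im_sum, sum_sub_distrib]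

section PermutationPair

variable {A : Type*} [Fintype A] {d : ℕ}

theorem filter_val_lt_eq_map_symm (π : A ≃ Fin d) (k : ℕ) :
    univ.filter (fun a => (π a : ℕ) < k) =
      (univ.filter fun i : Fin d => (i : ℕ) < k).map π.symm.toEmbedding := by
  ext a
  simp [mem_map_equiv]

theorem image_val_filter_val_lt (π : A ≃ Fin d) {k : ℕ} (hk : k ≤ d) :
    (univ.filter fun a => (π a : ℕ) < k).image (fun a => (π a : ℕ)) = range k := by
  ext i
  simp only [mem_image, mem_filter, mem_univ, true_and, mem_range]
  exact ⟨fun ⟨a, ha, hai⟩ => hai ▸ ha,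
    fun hi => ⟨π.symm ⟨i, by omega⟩, by simpa using hi, by simp⟩⟩

theorem pairIrreducible_iff (π0 π1 : A ≃ Fin d) :
    PairIrreducible π0 π1 ↔ ∀ k : ℕ, 1 ≤ k → k ≤ d - 1 →
      univ.filter (fun a => (π0 a : ℕ) < k) ≠ univ.filter (fun a => (π1 a : ℕ) < k) := by
  refine forall₃_congr fun k _ _ => not_congr ?_
  rw [filter_val_lt_eq_map_symm, filter_val_lt_eq_map_symm,
    ← (map_injective π1.toEmbedding).eq_iff, map_map, map_map]
  simp [map_eq_image, Function.comp_def]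

theorem sum_filter_val_lt_lt_sum (σ τ : A ≃ Fin d) {k : ℕ} (hk : k ≤ d)
    (hne : univ.filter (fun a => (σ a : ℕ) < k) ≠ univ.filter (fun a => (τ a : ℕ) < k)) :
    ∑ a ∈ univ.filter (fun a => (σ a : ℕ) < k), (σ a : ℕ) <
      ∑ a ∈ univ.filter (fun a => (σ a : ℕ) < k), (τ a : ℕ) := by
  set S := univ.filter fun a => (σ a : ℕ) < k
  have hσinj : Function.Injective fun a => (σ a : ℕ) := Fin.val_injective.comp σ.injective
  have hτinj : Function.Injective fun a => (τ a : ℕ) := Fin.val_injective.comp τ.injective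
  have hcard : #(S.image fun a => (τ a : ℕ)) = k := by
    rw [card_image_of_injective _ hτinj, ← card_image_of_injective _ hσinj,
      image_val_filter_val_lt σ hk, card_range]
  have hne' : S.image (fun a => (τ a : ℕ)) ≠ range k := by
    refine fun h => hne (ext fun a => ?_)
    have hmem : a ∈ S ↔ (τ a : ℕ) ∈ range k := by rw [← h, hτinj.mem_finset_image]
    simpa using hmem
  calc ∑ a ∈ S, (σ a : ℕ)
      = ∑ i ∈ range k, i := by
        rw [← image_val_filter_val_lt σ hk, sum_image fun a _ b _ h => hσinj h]
    _ < ∑ i ∈ S.image (fun a => (τ a : ℕ)), i := sum_range_lt_sum_of_card_eq hcard hne'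
    _ = ∑ a ∈ S, (τ a : ℕ) := sum_image fun a _ b _ h => hτinj h

theorem pairSuspension_of_pairIrreducible {π0 π1 : A ≃ Fin d} (hirr : PairIrreducible π0 π1)
    (lam : A → ℝ) (hlam : ∀ a, 0 < lam a) :
    PairSuspension π0 π1 (fun a => (⟨lam a, ((π1 a : ℕ) : ℝ) - ((π0 a : ℕ) : ℝ)⟩ : ℂ)) := by
  rw [pairIrreducible_iff] at hirr
  refine ⟨hlam, fun k hk1 hk2 => ⟨?_, ?_⟩⟩
  · rw [im_sum_mk_sub, sub_pos]
    exact_mod_cast sum_filter_val_lt_lt_sum π0 π1 (by omega) (hirr k hk1 hk2)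
  · rw [im_sum_mk_sub, sub_neg]
    exact_mod_cast sum_filter_val_lt_lt_sum π1 π0 (by omega) (hirr k hk1 hk2).symm

theorem pairIrreducible_of_pairSuspension {π0 π1 : A ≃ Fin d} {ζ : A → ℂ}
    (hζ : PairSuspension π0 π1 ζ) : PairIrreducible π0 π1 := by
  rw [pairIrreducible_iff]
  intro k hk1 hk2 heq
  obtain ⟨hpos, hneg⟩ := hζ.2 k hk1 hk2
  rw [heq] at hpos
  exact lt_asymm hpos hneg

end PermutationPair

theorem pair_suspension_iff_irreducible_general {A : Type*} [Fintype A] {d : ℕ}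
    (π0 π1 : A ≃ Fin d) :
    ((∃ ζ : A → ℂ, PairSuspension π0 π1 ζ) ↔ PairIrreducible π0 π1) ∧
    (PairIrreducible π0 π1 → ∀ lam : A → ℝ, (∀ a, 0 < lam a) →
      PairSuspension π0 π1
        (fun a => (⟨lam a, ((π1 a : ℕ) : ℝ) - ((π0 a : ℕ) : ℝ)⟩ : ℂ))) :=
  ⟨⟨fun ⟨_, hζ⟩ => pairIrreducible_of_pairSuspension hζ,
      fun hirr => ⟨_, pairSuspension_of_pairIrreducible hirr (fun _ => 1) fun _ => one_pos⟩⟩,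
    pairSuspension_of_pairIrreducible⟩

/-- A permutation pair on `d ≥ 2` letters admits a suspension data if and
only if it is irreducible; moreover if it is irreducible then, for every positive `λ`,
`ζ_α = λ_α + i (π₁(α) - π₀(α))` is a suspension data. -/
theorem pair_suspension_iff_irreducible {A : Type*} [Fintype A] {d : ℕ} (hd : 2 ≤ d)
    (π0 π1 : A ≃ Fin d) :
    ((∃ ζ : A → ℂ, PairSuspension π0 π1 ζ) ↔ PairIrreducible π0 π1) ∧
    (PairIrreducible π0 π1 → ∀ lam : A → ℝ, (∀ a, 0 < lam a) →
      PairSuspension π0 π1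
        (fun a => (⟨lam a, ((π1 a : ℕ) : ℝ) - ((π0 a : ℕ) : ℝ)⟩ : ℂ))) :=
  pair_suspension_iff_irreducible_general π0 π1
end

section
/- Let π = (π_0,π_1) be an irreducible permutation pair on d ≥ 2 letters and let ζ be a suspension data for π. For each letter α define h_α = Σ_{β : π_0(β) < π_0(α)} Im ζ_β − Σ_{β : π_1(β) < π_1(α)} Im ζ_β. Then h_α > 0 for every α ∈ 𝒜. -/
namespace PairIrreducible

variable {A : Type*} {d : ℕ} {π0 π1 : A ≃ Fin d}

theorem ne_zero_or_ne_zero (hd : 2 ≤ d) (hirr : PairIrreducible π0 π1) (a : A) :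
    (π0 a : ℕ) ≠ 0 ∨ (π1 a : ℕ) ≠ 0 := by
  by_contra! h
  have first_row : (Finset.univ.filter fun i : Fin d => (i : ℕ) < 1) = {π0 a} := by
    ext i
    simp [Fin.ext_iff, h.1]
  apply hirr 1 le_rfl (by omega)
  rw [first_row, Finset.image_singleton, Equiv.symm_apply_apply]
  exact congrArg _ (Fin.ext (by omega))

end PairIrreducible

namespace PairSuspension

variable {A : Type*} [Fintype A] {d : ℕ} {π0 π1 : A ≃ Fin d} {ζ : A → ℂ}

theorem im_sum_top_pos (hζ : PairSuspension π0 π1 ζ) {k : ℕ} (hk : 1 ≤ k) (hkd : k ≤ d - 1) :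
    0 < ∑ b ∈ Finset.univ.filter (fun b => (π0 b : ℕ) < k), (ζ b).im := by
  simpa only [Complex.im_sum] using (hζ.2 k hk hkd).1

theorem im_sum_bottom_neg (hζ : PairSuspension π0 π1 ζ) {k : ℕ} (hk : 1 ≤ k) (hkd : k ≤ d - 1) :
    ∑ b ∈ Finset.univ.filter (fun b => (π1 b : ℕ) < k), (ζ b).im < 0 := by
  simpa only [Complex.im_sum] using (hζ.2 k hk hkd).2

theorem im_sum_before_top_pos (hζ : PairSuspension π0 π1 ζ) {a : A} (ha : (π0 a : ℕ) ≠ 0) :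
    0 < ∑ b ∈ Finset.univ.filter (fun b => (π0 b : ℕ) < (π0 a : ℕ)), (ζ b).im :=
  hζ.im_sum_top_pos (Nat.one_le_iff_ne_zero.2 ha) (Nat.le_pred_of_lt (π0 a).isLt)

theorem im_sum_before_bottom_neg (hζ : PairSuspension π0 π1 ζ) {a : A} (ha : (π1 a : ℕ) ≠ 0) :
    ∑ b ∈ Finset.univ.filter (fun b => (π1 b : ℕ) < (π1 a : ℕ)), (ζ b).im < 0 :=
  hζ.im_sum_bottom_neg (Nat.one_le_iff_ne_zero.2 ha) (Nat.le_pred_of_lt (π1 a).isLt)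

theorem im_sum_before_top_nonneg (hζ : PairSuspension π0 π1 ζ) (a : A) :
    0 ≤ ∑ b ∈ Finset.univ.filter (fun b => (π0 b : ℕ) < (π0 a : ℕ)), (ζ b).im := by
  by_cases ha : (π0 a : ℕ) = 0
  · simp [ha]
  · exact (hζ.im_sum_before_top_pos ha).le

theorem im_sum_before_bottom_nonpos (hζ : PairSuspension π0 π1 ζ) (a : A) :
    ∑ b ∈ Finset.univ.filter (fun b => (π1 b : ℕ) < (π1 a : ℕ)), (ζ b).im ≤ 0 := by
  by_cases ha : (π1 a : ℕ) = 0
  · simp [ha]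
  · exact (hζ.im_sum_before_bottom_neg ha).le

end PairSuspension

/-- For an irreducible permutation pair (`d ≥ 2` letters) with
suspension data `ζ`, the heights
`h_α = Σ_{π₀(β) < π₀(α)} Im ζ_β - Σ_{π₁(β) < π₁(α)} Im ζ_β` are all positive. -/
theorem pair_heights_pos {A : Type*} [Fintype A] {d : ℕ} (hd : 2 ≤ d)
    (π0 π1 : A ≃ Fin d) (hirr : PairIrreducible π0 π1) (ζ : A → ℂ)
    (hζ : PairSuspension π0 π1 ζ) (a : A) :
    0 < (∑ b ∈ Finset.univ.filter (fun b => (π0 b : ℕ) < (π0 a : ℕ)), (ζ b).im) -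
        ∑ b ∈ Finset.univ.filter (fun b => (π1 b : ℕ) < (π1 a : ℕ)), (ζ b).im := by
  rcases hirr.ne_zero_or_ne_zero hd a with h0 | h1
  · linarith [hζ.im_sum_before_top_pos h0, hζ.im_sum_before_bottom_nonpos a]
  · linarith [hζ.im_sum_before_top_nonneg a, hζ.im_sum_before_bottom_neg h1]
end

section
/- For each ε ∈ {0,1}, the combinatorial Rauzy operation R_ε maps irreducible permutation pairs on d ≥ 2 letters to irreducible permutation pairs, and for every irreducible permutation pair π there exists an integer n ≥ 1 such that R_ε^n(π) = π. Consequently, if π′ = R_ε(π) with π irreducible, then there exists n ≥ 1 with π = R_ε^n(π′). -/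
/-- A pair of maps from the alphabet `A` to `{1, …, d}` (encoded `0`-based as `Fin d`). -/
structure PermPair (A : Type*) (d : ℕ) where
  p0 : A → Fin d
  p1 : A → Fin d

namespace PermPair

/-- `P` is a genuine permutation pair: both maps are bijections. -/
def IsPair {A : Type*} {d : ℕ} (P : PermPair A d) : Prop :=
  Function.Bijective P.p0 ∧ Function.Bijective P.p1

/-- Irreducibility of a permutation pair:
`π₁ ∘ π₀⁻¹ ({1,…,k}) ≠ {1,…,k}` for every `1 ≤ k ≤ d - 1`. -/
def Irreducible {A : Type*} [Fintype A] {d : ℕ} (P : PermPair A d) : Prop :=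
  ∀ k : ℕ, 1 ≤ k → k ≤ d - 1 →
    Finset.image P.p1 (Finset.univ.filter fun a => ((P.p0 a : ℕ)) < k) ≠
      Finset.univ.filter fun i : Fin d => (i : ℕ) < k

end PermPair

/-- The cycle `(k₀+1, k₀+2, …, d-1)` (in `0`-based notation): the identity on
`{0, …, k₀}`, sending the last element `d-1` to `k₀+1` and `j` to `j+1` for
`k₀ < j < d-1`.  (Positions out of range are treated harmlessly.) -/
def cycleMap (d k0 : ℕ) (j : Fin d) : Fin d :=
  if (j : ℕ) ≤ k0 then j
  else if h2 : (j : ℕ) + 1 = d then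
    (if h3 : k0 + 1 < d then ⟨k0 + 1, h3⟩ else j)
  else ⟨(j : ℕ) + 1, by have h1 := j.isLt; omega⟩

/-- The combinatorial Rauzy operation `R₀`: it keeps `π₀` and, setting
`k = π₁(π₀⁻¹(d))`, modifies `π₁` by the corresponding cycle. -/
noncomputable def RauzyR0 {A : Type*} [Fintype A] {d : ℕ} (P : PermPair A d) : PermPair A d :=
  ⟨P.p0, fun a => cycleMap d
      (if h : ∃ b, ((P.p0 b : ℕ)) = d - 1 then ((P.p1 h.choose : ℕ)) else 0)
      (P.p1 a)⟩

/-- The combinatorial Rauzy operation `R₁`: it keeps `π₁` and, setting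
`k = π₀(π₁⁻¹(d))`, modifies `π₀` by the corresponding cycle. -/
noncomputable def RauzyR1 {A : Type*} [Fintype A] {d : ℕ} (P : PermPair A d) : PermPair A d :=
  ⟨fun a => cycleMap d
      (if h : ∃ b, ((P.p1 b : ℕ)) = d - 1 then ((P.p0 h.choose : ℕ)) else 0)
      (P.p0 a), P.p1⟩

/-- The Rauzy operation `R_ε`, `ε ∈ {0, 1}`. -/
noncomputable def RauzyOp {A : Type*} [Fintype A] {d : ℕ} (ε : Bool) (P : PermPair A d) :
    PermPair A d :=
  bif ε then RauzyR1 P else RauzyR0 P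

/-!
Both Rauzy operations are injective on all of `PermPair A d`: `R₀` keeps `π₀`, hence the letter
`a` in last position on top, and `a` is a fixed point of the cycle applied to `π₁`, so the
cycle can be read off `R₀ π` and undone. An injective self-map of a finite set permutes it, so
every pair is periodic. Irreducibility survives `R₀` because the cycle fixes the positions
`≤ π₁ a` and moves the others above `π₁ a`, while a splitting at `k > π₁ a` would put `a` among
the first `k` letters on top; it survives `R₁ = swap ∘ R₀ ∘ swap` because irreducibility is
symmetric in `π₀` and `π₁`.
-/

open Function

section cycleMap

variable {d k0 : ℕ}

theorem cycleMap_of_le {j : Fin d} (h : (j : ℕ) ≤ k0) : cycleMap d k0 j = j := by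
  simp [cycleMap, h]

theorem lt_cycleMap_of_lt {j : Fin d} (h : k0 < (j : ℕ)) : k0 < (cycleMap d k0 j : ℕ) := by
  have hj := j.isLt
  simp only [cycleMap]
  split_ifs <;> simp <;> omega

theorem cycleMap_injective (d k0 : ℕ) : Injective (cycleMap d k0) := by
  intro i j h
  have hi := i.isLt
  have hj := j.isLt
  simp only [cycleMap] at h
  rw [Fin.ext_iff] at h ⊢
  split_ifs at h <;> simp_all <;> omega

theorem cycleMap_bijective (d k0 : ℕ) : Bijective (cycleMap d k0) :=
  Finite.injective_iff_bijective.mp (cycleMap_injective d k0)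

theorem cycleMap_lt_iff {k : ℕ} (hk : k ≤ k0 + 1) (j : Fin d) :
    (cycleMap d k0 j : ℕ) < k ↔ (j : ℕ) < k := by
  rcases le_or_gt (j : ℕ) k0 with hj | hj
  · rw [cycleMap_of_le hj]
  · have := lt_cycleMap_of_lt hj
    omega

theorem eq_of_cycleMap_comp_eq {A : Type*} {f g : A → Fin d} (b : A)
    (h : (fun x => cycleMap d (f b) (f x)) = fun x => cycleMap d (g b) (g x)) : f = g := by
  have hb := congrFun h b
  rw [cycleMap_of_le le_rfl, cycleMap_of_le le_rfl] at hb
  rw [hb] at h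
  exact (cycleMap_injective d _).comp_left h

end cycleMap

namespace PermPair

variable {A : Type*} {d : ℕ} {P : PermPair A d} {k : ℕ}

def equivProd : PermPair A d ≃ (A → Fin d) × (A → Fin d) where
  toFun P := (P.p0, P.p1)
  invFun p := ⟨p.1, p.2⟩
  left_inv _ := rfl
  right_inv _ := rfl

instance [Finite A] : Finite (PermPair A d) :=
  Finite.of_equiv _ equivProd.symm

def swap (P : PermPair A d) : PermPair A d :=
  ⟨P.p1, P.p0⟩

theorem swap_involutive : Involutive (swap : PermPair A d → PermPair A d) :=
  fun _ => rfl

theorem isPair_swap : P.swap.IsPair ↔ P.IsPair :=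
  And.comm

def IsReducibleAt (P : PermPair A d) (k : ℕ) : Prop :=
  ∀ a, (P.p0 a : ℕ) < k ↔ (P.p1 a : ℕ) < k

theorem isReducibleAt_swap : P.swap.IsReducibleAt k ↔ P.IsReducibleAt k :=
  forall_congr' fun _ => Iff.comm

variable [Fintype A]

theorem image_eq_iff_isReducibleAt (h : Bijective P.p1) (k : ℕ) :
    Finset.image P.p1 (Finset.univ.filter fun a => (P.p0 a : ℕ) < k) =
        Finset.univ.filter (fun i : Fin d => (i : ℕ) < k) ↔ P.IsReducibleAt k := by
  constructor
  · intro himg a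
    constructor
    · intro ha
      have : P.p1 a ∈ Finset.image P.p1 (Finset.univ.filter fun a => (P.p0 a : ℕ) < k) :=
        Finset.mem_image_of_mem _ (by simpa using ha)
      rw [himg] at this
      simpa using this
    · intro ha
      have : P.p1 a ∈ Finset.univ.filter (fun i : Fin d => (i : ℕ) < k) := by simpa using ha
      rw [← himg] at this
      obtain ⟨b, hb, hba⟩ := Finset.mem_image.mp this
      rw [h.1 hba] at hb
      simpa using hb
  · intro hred
    ext i
    obtain ⟨a, rfl⟩ := h.2 i
    simp [h.1.eq_iff, hred a]

theorem irreducible_iff (h : Bijective P.p1) :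
    P.Irreducible ↔ ∀ k, 1 ≤ k → k ≤ d - 1 → ¬P.IsReducibleAt k := by
  simp only [Irreducible, ne_eq, image_eq_iff_isReducibleAt h]

theorem irreducible_swap (hP : P.IsPair) : P.swap.Irreducible ↔ P.Irreducible := by
  rw [irreducible_iff hP.1, irreducible_iff hP.2]
  simp only [isReducibleAt_swap]

end PermPair

open PermPair

section Rauzy

variable {A : Type*} [Fintype A] {d : ℕ} {P : PermPair A d}

theorem rauzyR0_injective : Injective (RauzyR0 : PermPair A d → PermPair A d) := by
  rintro ⟨p0, p1⟩ ⟨q0, q1⟩ h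
  simp only [RauzyR0, PermPair.mk.injEq] at h
  obtain ⟨rfl, h⟩ := h
  congr
  by_cases hlast : ∃ b, (p0 b : ℕ) = d - 1
  · simp only [dif_pos hlast] at h
    exact eq_of_cycleMap_comp_eq _ h
  · simp only [dif_neg hlast] at h
    exact (cycleMap_injective d 0).comp_left h

theorem rauzyR0_eq (hinj : Injective P.p0) {a : A} (ha : (P.p0 a : ℕ) = d - 1) :
    RauzyR0 P = ⟨P.p0, fun x => cycleMap d (P.p1 a) (P.p1 x)⟩ := by
  have hlast : ∃ b, (P.p0 b : ℕ) = d - 1 := ⟨a, ha⟩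
  have hchoose : hlast.choose = a := hinj (Fin.ext (hlast.choose_spec.trans ha.symm))
  simp only [RauzyR0, dif_pos hlast, hchoose]

theorem isPair_rauzyR0 (hP : P.IsPair) : (RauzyR0 P).IsPair :=
  ⟨hP.1, (cycleMap_bijective d _).comp hP.2⟩

theorem irreducible_rauzyR0 (hP : P.IsPair) (hI : P.Irreducible) : (RauzyR0 P).Irreducible := by
  rw [irreducible_iff (isPair_rauzyR0 hP).2]
  rw [irreducible_iff hP.2] at hI
  intro k hk1 hkd hred
  obtain ⟨a, ha⟩ := hP.1.2 ⟨d - 1, by omega⟩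
  rw [rauzyR0_eq hP.1.1 (congrArg Fin.val ha)] at hred
  rcases le_or_gt k (P.p1 a) with hk | hk
  · exact hI k hk1 hkd fun x => by
      simpa only [cycleMap_lt_iff (Nat.le_succ_of_le hk)] using hred x
  · have := (hred a).mpr (by dsimp only; rwa [cycleMap_of_le le_rfl])
    simp only [ha] at this
    omega

theorem rauzyR1_eq_swap (P : PermPair A d) : RauzyR1 P = (RauzyR0 P.swap).swap :=
  rfl

theorem rauzyR1_injective : Injective (RauzyR1 : PermPair A d → PermPair A d) :=
  swap_involutive.injective.comp (rauzyR0_injective.comp swap_involutive.injective)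

theorem isPair_rauzyR1 (hP : P.IsPair) : (RauzyR1 P).IsPair :=
  isPair_swap.mpr (isPair_rauzyR0 (isPair_swap.mpr hP))

theorem irreducible_rauzyR1 (hP : P.IsPair) (hI : P.Irreducible) : (RauzyR1 P).Irreducible := by
  have hPs : P.swap.IsPair := isPair_swap.mpr hP
  rw [rauzyR1_eq_swap, irreducible_swap (isPair_rauzyR0 hPs)]
  exact irreducible_rauzyR0 hPs ((irreducible_swap hP).mpr hI)

theorem rauzyOp_injective (ε : Bool) : Injective (RauzyOp ε : PermPair A d → PermPair A d) := by
  cases ε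
  exacts [rauzyR0_injective, rauzyR1_injective]

theorem isPair_rauzyOp (ε : Bool) (hP : P.IsPair) : (RauzyOp ε P).IsPair := by
  cases ε
  exacts [isPair_rauzyR0 hP, isPair_rauzyR1 hP]

theorem irreducible_rauzyOp (ε : Bool) (hP : P.IsPair) (hI : P.Irreducible) :
    (RauzyOp ε P).Irreducible := by
  cases ε
  exacts [irreducible_rauzyR0 hP hI, irreducible_rauzyR1 hP hI]

end Rauzy

theorem rauzyOp_irreducible_periodic_general {A : Type*} [Fintype A] {d : ℕ}
    (ε : Bool) :
    (∀ P : PermPair A d, P.IsPair → P.Irreducible →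
        (RauzyOp ε P).IsPair ∧ (RauzyOp ε P).Irreducible) ∧
    (∀ P : PermPair A d, P.IsPair → P.Irreducible →
        ∃ n : ℕ, 1 ≤ n ∧ (RauzyOp ε)^[n] P = P) ∧
    (∀ P P' : PermPair A d, P.IsPair → P.Irreducible → P' = RauzyOp ε P →
        ∃ n : ℕ, 1 ≤ n ∧ (RauzyOp ε)^[n] P' = P) := by
  have periodic (P : PermPair A d) : ∃ n, 0 < n ∧ IsPeriodicPt (RauzyOp ε) n P :=
    (rauzyOp_injective ε).mem_periodicPts P
  refine ⟨fun P hP hI => ⟨isPair_rauzyOp ε hP, irreducible_rauzyOp ε hP hI⟩,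
    fun P _ _ => (periodic P).imp fun _ h => ⟨h.1, h.2.eq⟩, ?_⟩
  rintro P _ _ _ rfl
  obtain ⟨n, hn, hper⟩ := periodic P
  refine ⟨2 * n - 1, by omega, ?_⟩
  rw [← iterate_succ_apply, show (2 * n - 1).succ = n * 2 by omega]
  exact (hper.mul_const 2).eq

/-- Each combinatorial Rauzy operation `R_ε` maps irreducible permutation
pairs on `d ≥ 2` letters to irreducible permutation pairs, every irreducible pair is
periodic under `R_ε`, and consequently if `π' = R_ε(π)` with `π` irreducible then
`π = R_ε^n(π')` for some `n ≥ 1`. -/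
theorem rauzyOp_irreducible_periodic {A : Type*} [Fintype A] {d : ℕ} (hd : 2 ≤ d)
    (ε : Bool) :
    (∀ P : PermPair A d, P.IsPair → P.Irreducible →
        (RauzyOp ε P).IsPair ∧ (RauzyOp ε P).Irreducible) ∧
    (∀ P : PermPair A d, P.IsPair → P.Irreducible →
        ∃ n : ℕ, 1 ≤ n ∧ (RauzyOp ε)^[n] P = P) ∧
    (∀ P P' : PermPair A d, P.IsPair → P.Irreducible → P' = RauzyOp ε P →
        ∃ n : ℕ, 1 ≤ n ∧ (RauzyOp ε)^[n] P' = P) :=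
  rauzyOp_irreducible_periodic_general ε
end
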